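/- arXiv:2305.16064 — 11 statements merged into one kernel-verified Lean document; each statement's English description precedes it below -/
import Mathlib

section
/- Let q be an odd prime power and let F_q be the finite field with q elements. Let k be a positive integer dividing q-1 and let a_1,...,a_k be the k distinct k-th roots of unity in F_q. Then the product over all pairs 1 ≤ i < j ≤ k of (a_j - a_i)(1/a_j - 1/a_i) equals k^k in F_q (i.e., the image of the integer k^k in F_q). -/
/-!
Since `(a_j - a_i)(a_j⁻¹ - a_i⁻¹) = (1 - a_i / a_j)(1 - a_j / a_i)`, the product over the pairs
`i < j` is the product over all ordered pairs `i ≠ j` of `1 - a_i / a_j`. For fixed `j`, the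
inner product is `∏_{i ≠ j} (a_j - a_i) / a_j ^ (k - 1)`, and the numerator is the derivative of
`X ^ k - 1 = ∏ (X - a_i)` at `a_j`, namely `k a_j ^ (k - 1)`. So every inner product equals `k`.
-/

open Polynomial Finset

theorem Finset.prod_ite_lt_mul_swap_eq_prod_erase {ι M : Type*} [Fintype ι] [LinearOrder ι] [CommMonoid M]
    (f : ι → ι → M) :
    ∏ i, ∏ j, (if i < j then f i j * f j i else 1) = ∏ j, ∏ i ∈ univ.erase j, f i j := by
  have hsplit : ∀ i j, (if i < j then f i j * f j i else 1) =
      (if i < j then f i j else 1) * (if i < j then f j i else 1) := fun i j => by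
    split_ifs <;> simp
  simp only [hsplit, prod_mul_distrib]
  rw [prod_comm (f := fun i j => if i < j then f i j else 1), ← prod_mul_distrib]
  refine prod_congr rfl fun j _ => ?_
  rw [← prod_mul_distrib, ← filter_ne', prod_filter]
  refine prod_congr rfl fun i _ => ?_
  rcases lt_trichotomy i j with h | rfl | h
  · simp [h, h.ne, h.asymm]
  · simp
  · simp [h, h.ne', h.asymm]

theorem Polynomial.eval_derivative_prod_X_sub_C {ι R : Type*} [Fintype ι] [DecidableEq ι]
    [CommRing R] (a : ι → R) (j : ι) :
    (derivative (∏ i, (X - C (a i)))).eval (a j) = ∏ i ∈ univ.erase j, (a j - a i) := by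
  rw [← mul_prod_erase univ _ (mem_univ j), derivative_mul]
  simp [eval_prod]

theorem Polynomial.X_pow_sub_one_eq_prod_X_sub_C {ι R : Type*} [Fintype ι] [CommRing R]
    [IsDomain R] {n : ℕ} (hn : 0 < n) (hcard : Fintype.card ι = n) (a : ι → R)
    (ha : Function.Injective a) (hroot : ∀ i, a i ^ n = 1) :
    X ^ n - 1 = ∏ i, (X - C (a i)) := by
  have hmonic : (X ^ n - 1 : R[X]).Monic := leadingCoeff_X_pow_sub_one hn
  refine eq_of_monic_of_dvd_of_natDegree_le (monic_prod_of_monic _ _ fun i _ => monic_X_sub_C _)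
    hmonic ?_ ?_
  · have hle : univ.val.map a ≤ (X ^ n - 1 : R[X]).roots := by
      rw [Multiset.le_iff_subset (univ.nodup.map ha)]
      intro x hx
      obtain ⟨i, -, rfl⟩ := Multiset.mem_map.mp hx
      simp [mem_roots hmonic.ne_zero, hroot i]
    have := (Multiset.prod_X_sub_C_dvd_iff_le_roots hmonic.ne_zero _).mpr hle
    rwa [Multiset.map_map] at this
  · rw [← C_1, natDegree_X_pow_sub_C, natDegree_prod_of_monic _ _ fun i _ => monic_X_sub_C _]
    simp [hcard]

theorem prod_erase_one_sub_div_eq_of_pow_eq_one {ι F : Type*} [Fintype ι] [DecidableEq ι]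
    [Field F] {n : ℕ} (hn : 0 < n) (hcard : Fintype.card ι = n) (a : ι → F)
    (ha : Function.Injective a) (hroot : ∀ i, a i ^ n = 1) (j : ι) :
    ∏ i ∈ univ.erase j, (1 - a i / a j) = n := by
  have ha0 : a j ≠ 0 := fun h => by simpa [h, hn.ne'] using hroot j
  have hderiv : ∏ i ∈ univ.erase j, (a j - a i) = n * a j ^ (n - 1) := by
    rw [← eval_derivative_prod_X_sub_C, ← X_pow_sub_one_eq_prod_X_sub_C hn hcard a ha hroot]
    simp [derivative_X_pow]
  calc ∏ i ∈ univ.erase j, (1 - a i / a j) = ∏ i ∈ univ.erase j, (a j - a i) / a j :=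
        prod_congr rfl fun i _ => by field_simp
    _ = (∏ i ∈ univ.erase j, (a j - a i)) / a j ^ (n - 1) := by
        rw [prod_div_distrib, prod_const, card_erase_of_mem (mem_univ j), card_univ, hcard]
    _ = n := by rw [hderiv, mul_div_cancel_right₀ _ (pow_ne_zero _ ha0)]

theorem stmt_0_general (F : Type*) [Field F] (k : ℕ)
    (hk : 0 < k)
    (a : Fin k → F) (ha : Function.Injective a) (hroot : ∀ i, a i ^ k = 1) :
    (∏ i : Fin k, ∏ j : Fin k,
        if i < j then (a j - a i) * ((a j)⁻¹ - (a i)⁻¹) else 1) = (k : F) ^ k := by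
  have ha0 : ∀ i, a i ≠ 0 := fun i h => by simpa [h, hk.ne'] using hroot i
  calc (∏ i : Fin k, ∏ j : Fin k, if i < j then (a j - a i) * ((a j)⁻¹ - (a i)⁻¹) else 1)
      = ∏ i : Fin k, ∏ j : Fin k,
          if i < j then (1 - a i / a j) * (1 - a j / a i) else 1 := by
        refine prod_congr rfl fun i _ => prod_congr rfl fun j _ => ?_
        split_ifs
        · field_simp [ha0 i, ha0 j]
        · rfl
    _ = ∏ j : Fin k, ∏ i ∈ univ.erase j, (1 - a i / a j) :=
        prod_ite_lt_mul_swap_eq_prod_erase fun i j => 1 - a i / a j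
    _ = ∏ _j : Fin k, (k : F) := prod_congr rfl fun j _ =>
        prod_erase_one_sub_div_eq_of_pow_eq_one hk (Fintype.card_fin k) a ha hroot j
    _ = (k : F) ^ k := by simp

theorem stmt_0 (F : Type*) [Field F] [Fintype F] (q k : ℕ)
    (hq : Fintype.card F = q) (hodd : Odd q) (hk : 0 < k) (hdvd : k ∣ q - 1)
    (a : Fin k → F) (ha : Function.Injective a) (hroot : ∀ i, a i ^ k = 1) :
    (∏ i : Fin k, ∏ j : Fin k,
        if i < j then (a j - a i) * ((a j)⁻¹ - (a i)⁻¹) else 1) = (k : F) ^ k :=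
  stmt_0_general F k hk a ha hroot
end

section
/- Let R be a commutative ring, n a positive integer, and P(t) = p_0 + p_1 t + ... + p_{n-1} t^{n-1} a polynomial in R[t]. For elements X_1,...,X_n and Y_1,...,Y_n of R, the determinant of the n×n matrix with (i,j)-entry P(X_i · Y_j) equals (∏_{i=0}^{n-1} p_i) · ∏_{1 ≤ i < j ≤ n} (X_j - X_i)(Y_j - Y_i). -/
theorem stmt_3 (R : Type*) [CommRing R] (n : ℕ) (hn : 0 < n)
    (p : Fin n → R) (X Y : Fin n → R) :
    Matrix.det (Matrix.of fun i j : Fin n =>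
        ∑ s : Fin n, p s * (X i * Y j) ^ (s : ℕ))
      = (∏ s : Fin n, p s) *
        ∏ i : Fin n, ∏ j : Fin n, if i < j then (X j - X i) * (Y j - Y i) else 1 := by
  have hfac : (Matrix.of fun i j : Fin n =>
      ∑ s : Fin n, p s * (X i * Y j) ^ (s : ℕ))
      = Matrix.vandermonde X * Matrix.diagonal p * (Matrix.vandermonde Y).transpose := by
    ext i j
    simp [Matrix.mul_apply, Matrix.diagonal, Matrix.vandermonde, mul_pow,
      Finset.sum_ite_eq, mul_comm, mul_assoc, mul_left_comm]
  rw [hfac, Matrix.det_mul, Matrix.det_mul, Matrix.det_transpose,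
    Matrix.det_diagonal, Matrix.det_vandermonde, Matrix.det_vandermonde]
  have hX : ∀ Z : Fin n → R, (∏ i : Fin n, ∏ j ∈ Finset.Ioi i, (Z j - Z i))
      = ∏ i : Fin n, ∏ j : Fin n, if i < j then (Z j - Z i) else 1 := by
    intro Z
    refine Finset.prod_congr rfl fun i _ => ?_
    rw [show Finset.Ioi i = Finset.univ.filter (i < ·) from by ext; simp,
      Finset.prod_filter]
  rw [hX X, hX Y]
  have hsplit : ∀ i j : Fin n, (if i < j then (X j - X i) * (Y j - Y i) else 1)
      = (if i < j then X j - X i else 1) * (if i < j then Y j - Y i else 1) := by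
    intro i j; split <;> ring
  simp only [hsplit, Finset.prod_mul_distrib]
  ring
end

section
/- Let R be a commutative ring, s an even positive integer, and b_0,...,b_{s-1} ∈ R with b_i = b_{s-i} for all 1 ≤ i ≤ s-1. Then there exists u ∈ R such that the determinant of the circulant matrix C(b_0,...,b_{s-1}) equals (∑_{i=0}^{s-1} b_i) · (∑_{i=0}^{s-1} (-1)^i b_i) · u². -/
/-!
Write `s = 2m` and read the circulant matrix as multiplication by `f = ∑ b_j X^j` on the group
algebra `A = R[ℤ/2m]`. Put `y = X + X⁻¹` and `Ψ = ∑_{k<m} X^{2k}`. Since `X²Ψ = Ψ`, the span of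
`Ψ, XΨ` is an ideal, on which `f` acts by `[[p, q], [q, p]]`, where `p` and `q` are the sums of the
`b_j` over even and odd `j`; its determinant is `p² - q² = (∑ b_j) (∑ (-1)^j b_j)`. Modulo `Ψ` the
monic polynomial `S_{m-1}` (Chebyshev/Vieta–Fibonacci) vanishes at `y`, because
`X^{m-1} S_{m-1}(y) = Ψ`, and the `X^ε y^k` (`ε < 2`, `k < m - 1`) complete `Ψ, XΨ` to a basis
of `A`. Symmetry of `b` gives `f ≡ h(y)` modulo `Ψ`, so on the quotient `f` acts on both halves
`ε = 0, 1` by the matrix `H` of multiplication by `h` on `R[y]/(S_{m-1})`. Hence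
`det f = (p² - q²) (det H)²`.
-/

namespace Polynomial.Chebyshev

variable (R : Type*) [CommRing R]

theorem S_natCast_add_two (n : ℕ) : S R (n + 2 : ℕ) = X * S R (n + 1 : ℕ) - S R n := by
  push_cast
  exact S_add_two R n

theorem natDegree_S_le (n : ℕ) : (S R n).natDegree ≤ n := by
  induction n using Nat.twoStepInduction with
  | zero => simp
  | one => simpa using natDegree_X_le
  | more n h0 h1 =>
    rw [S_natCast_add_two]
    refine (natDegree_sub_le _ _).trans (max_le ?_ (by omega))
    exact natDegree_mul_le.trans (by linarith [natDegree_X_le (R := R)])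

theorem coeff_S_self (n : ℕ) : (S R n).coeff n = 1 := by
  induction n using Nat.twoStepInduction with
  | zero => simp
  | one => simp
  | more n h0 h1 =>
    rw [S_natCast_add_two, coeff_sub, coeff_X_mul, h1,
      coeff_eq_zero_of_natDegree_lt ((natDegree_S_le R n).trans_lt (by omega)), sub_zero]

theorem monic_S (n : ℕ) : (S R n).Monic :=
  monic_of_natDegree_le_of_coeff_eq_one n (natDegree_S_le R n) (coeff_S_self R n)

end Polynomial.Chebyshev

theorem Polynomial.aeval_eq_sum_range_of_degree_lt {R A : Type*} [CommSemiring R] [Semiring A]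
    [Algebra R A] {p : Polynomial R} {n : ℕ} (hp : p.degree < n) (x : A) :
    aeval x p = ∑ k ∈ Finset.range n, p.coeff k • x ^ k := by
  rcases eq_or_ne p 0 with rfl | hp0
  · simp
  · exact aeval_eq_sum_range' ((natDegree_lt_iff_degree_lt hp0).mpr hp) x

section LinearAlgebra

open Module Submodule

variable {R M ι κ : Type*} [CommRing R] [AddCommGroup M] [Module R M]
  [Fintype ι] [DecidableEq ι] [Fintype κ] [DecidableEq κ]

theorem LinearMap.det_eq_det_of_basis (v : Basis ι R M) (φ : M →ₗ[R] M) (D : Matrix ι ι R)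
    (hφ : ∀ j, φ (v j) = ∑ i, D i j • v i) : LinearMap.det φ = D.det := by
  rw [← LinearMap.det_toLin v D]
  congr 1
  exact v.ext fun j => by rw [Matrix.toLin_self, hφ]

theorem LinearMap.det_eq_det_mul_det_of_basis_sum (v : Basis (ι ⊕ κ) R M) (φ : M →ₗ[R] M)
    (A : Matrix ι ι R) (B : Matrix κ κ R)
    (hA : ∀ i, φ (v (.inl i)) = ∑ i', A i' i • v (.inl i'))
    (hB : ∀ k, φ (v (.inr k)) - ∑ k', B k' k • v (.inr k') ∈
      span R (Set.range (v ∘ .inl))) :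
    LinearMap.det φ = A.det * B.det := by
  choose L hL using fun k => (mem_span_range_iff_exists_fun R).mp (hB k)
  rw [LinearMap.det_eq_det_of_basis v φ (.fromBlocks A (.of fun i k => L k i) 0 B),
    Matrix.det_fromBlocks_zero₂₁]
  rintro (i | k)
  · simp [Fintype.sum_sum_type, hA]
  · have hk := hL k
    simp only [Function.comp_apply] at hk
    simp [Fintype.sum_sum_type, hk]

end LinearAlgebra

theorem Matrix.det_circulant_eq_det_mulLeft {R G : Type*} [CommRing R] [AddCommGroup G]
    [Fintype G] [DecidableEq G] (b : G → R) :
    (Matrix.circulant b).det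
      = LinearMap.det (LinearMap.mulLeft R (∑ g, AddMonoidAlgebra.single g (b g))) := by
  refine (LinearMap.det_eq_det_of_basis (AddMonoidAlgebra.basis G R) _ _ fun j => ?_).symm
  simp only [AddMonoidAlgebra.basis_apply, LinearMap.mulLeft_apply, Finset.sum_mul,
    AddMonoidAlgebra.single_mul_single, mul_one, Matrix.circulant_apply]
  exact Fintype.sum_equiv (Equiv.addRight j) _ _ fun g => by simp [AddMonoidAlgebra.smul_single]

theorem Fin.sum_neg_one_pow_mul_eq_sub {R : Type*} [Ring R] {n : ℕ} (b : Fin n → R) :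
    ∑ j : Fin n, (-1) ^ (j : ℕ) * b j
      = ∑ j : Fin n with Even j.val, b j - ∑ j : Fin n with ¬Even j.val, b j := by
  rw [← Finset.sum_filter_add_sum_filter_not _ (fun j : Fin n => Even j.val)
    (fun j => (-1) ^ (j : ℕ) * b j), sub_eq_add_neg, ← Finset.sum_neg_distrib]
  congr 1 <;> refine Finset.sum_congr rfl fun j hj => ?_ <;> rw [Finset.mem_filter] at hj
  · rw [hj.2.neg_one_pow, one_mul]
  · rw [(Nat.not_even_iff_odd.mp hj.2).neg_one_pow, neg_one_mul]

noncomputable section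

namespace SymmetricCirculant

open AddMonoidAlgebra Polynomial Fin.CommRing
open scoped Kronecker

variable {R : Type*} [CommRing R] {m : ℕ} [NeZero (2 * m)]

local notation "𝔸" => AddMonoidAlgebra R (Fin (2 * m))

theorem pos_of_neZero_two_mul : 0 < m :=
  Nat.pos_of_ne_zero fun h => NeZero.ne (2 * m) (by simp [h])

def xpow (z : ℤ) : AddMonoidAlgebra R (Fin (2 * m)) := single (z : Fin (2 * m)) 1

theorem xpow_add (a b : ℤ) : (xpow (a + b) : 𝔸) = xpow a * xpow b := by
  simp [xpow, single_mul_single]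

theorem xpow_zero : (xpow 0 : 𝔸) = 1 := by
  simp [xpow, one_def]

theorem xpow_eq_of_dvd_sub {a b : ℤ} (h : (2 * m : ℤ) ∣ a - b) :
    (xpow a : 𝔸) = xpow b := by
  unfold xpow
  congr 1
  exact_mod_cast (CharP.intCast_eq_intCast (Fin (2 * m)) (2 * m)).mpr (Int.modEq_iff_dvd.mpr h).symm

theorem xpow_val (j : Fin (2 * m)) : (xpow (j : ℕ) : 𝔸) = single j 1 := by
  simp [xpow]

theorem single_eq_smul_xpow (j : Fin (2 * m)) (r : R) :
    (single j r : 𝔸) = r • xpow (j : ℕ) := by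
  rw [xpow_val, smul_single, smul_eq_mul, mul_one]

def xAddInv : AddMonoidAlgebra R (Fin (2 * m)) := xpow 1 + xpow (-1)

theorem xAddInv_mul_xpow (a : ℤ) : (xAddInv * xpow a : 𝔸) = xpow (a + 1) + xpow (a - 1) := by
  rw [xAddInv, add_mul, ← xpow_add, ← xpow_add, add_comm 1, neg_add_eq_sub]

theorem aeval_C_xAddInv (n : ℤ) :
    aeval (xAddInv : 𝔸) (Chebyshev.C R n) = xpow n + xpow (-n) := by
  induction n using Polynomial.Chebyshev.induct with
  | zero => simp [map_ofNat, xpow_zero, one_add_one_eq_two]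
  | one => simp [xAddInv]
  | add_two n h1 h0 =>
    rw [Chebyshev.C_add_two, map_sub, map_mul, aeval_X, h1, h0, mul_add, xAddInv_mul_xpow,
      xAddInv_mul_xpow]
    ring_nf
  | neg_add_one n h0 h1 =>
    rw [Chebyshev.C_sub_one, map_sub, map_mul, aeval_X, h0, h1, mul_add, xAddInv_mul_xpow,
      xAddInv_mul_xpow]
    ring_nf

def evenPowSum (n : ℕ) : AddMonoidAlgebra R (Fin (2 * m)) :=
  ∑ k ∈ Finset.range n, xpow (2 * k)

-- The integer index covers `n = 0` through `S_{-1} = 0`, which makes `m = 1` uniform below.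
theorem xpow_sub_one_mul_aeval_S (n : ℕ) :
    (xpow (n - 1) * aeval xAddInv (Chebyshev.S R (n - 1)) : 𝔸) = evenPowSum n := by
  induction n using Nat.twoStepInduction with
  | zero => simp [evenPowSum]
  | one => simp [evenPowSum, xpow_zero]
  | more n h0 h1 =>
    have hS : Chebyshev.S R ((n + 2 : ℕ) - 1 : ℤ) = X * Chebyshev.S R ((n + 1 : ℕ) - 1 : ℤ)
        - Chebyshev.S R ((n : ℕ) - 1 : ℤ) := by
      rw [show ((n + 2 : ℕ) : ℤ) - 1 = n + 1 by push_cast; ring,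
        show ((n + 1 : ℕ) : ℤ) - 1 = n by push_cast; ring, Chebyshev.S_add_one]
    have hx : (xpow ((n + 2 : ℕ) - 1 : ℤ) : 𝔸) = xpow 2 * xpow ((n : ℕ) - 1 : ℤ) := by
      rw [← xpow_add]; push_cast; ring_nf
    have hxy : (xpow ((n + 2 : ℕ) - 1 : ℤ) * xAddInv : 𝔸)
        = (xpow 2 + 1) * xpow ((n + 1 : ℕ) - 1 : ℤ) := by
      rw [mul_comm (xpow _), xAddInv_mul_xpow, add_mul, ← xpow_add, one_mul]; push_cast; ring_nf
    rw [hS, map_sub, map_mul, aeval_X, mul_sub, ← mul_assoc, hxy, hx, mul_assoc, mul_assoc, h1,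
      h0]
    simp only [evenPowSum, Finset.sum_range_succ]
    rw [show (xpow (2 * ((n + 1 : ℕ) : ℤ)) : 𝔸) = xpow 2 * xpow (2 * n) by
      rw [← xpow_add]; push_cast; ring_nf]
    ring

local notation "Ψ" => (evenPowSum m : 𝔸)

theorem xpow_two_mul_evenPowSum : xpow 2 * Ψ = Ψ := by
  have hwrap : (xpow (2 * m) : 𝔸) = xpow (2 * (0 : ℕ)) := xpow_eq_of_dvd_sub ⟨1, by ring⟩
  have h := Finset.sum_range_succ' (fun k : ℕ => (xpow (2 * k) : 𝔸)) m
  rw [Finset.sum_range_succ, hwrap] at h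
  calc xpow 2 * Ψ = ∑ k ∈ Finset.range m, (xpow (2 * (k + 1 : ℕ)) : 𝔸) := by
        simp only [evenPowSum, Finset.mul_sum, ← xpow_add]; push_cast; ring_nf
    _ = Ψ := (add_right_cancel h).symm

theorem xpow_natCast_mul_evenPowSum (n : ℕ) : xpow n * Ψ = xpow (n % 2 : ℕ) * Ψ := by
  induction n using Nat.strong_induction_on with
  | _ n ih =>
    match n with
    | 0 | 1 => rfl
    | n + 2 =>
      rw [show ((n + 2 : ℕ) : ℤ) = 2 + n by push_cast; ring, xpow_add, mul_assoc,
        ih n (by omega), mul_left_comm, xpow_two_mul_evenPowSum, Nat.add_mod_right]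

theorem aeval_S_eq_xpow_mul_evenPowSum :
    aeval (xAddInv : 𝔸) (Chebyshev.S R (m - 1 : ℕ)) = xpow (1 - m) * Ψ := by
  rw [Nat.cast_sub pos_of_neZero_two_mul, Nat.cast_one, ← xpow_sub_one_mul_aeval_S, ← mul_assoc,
    ← xpow_add, sub_add_sub_cancel', sub_self, xpow_zero, one_mul]

theorem aeval_S_sub_two_eq :
    aeval (xAddInv : 𝔸) (Chebyshev.S R (m - 2)) = xpow m * Ψ - xpow m := by
  have hm : 1 ≤ m := pos_of_neZero_two_mul
  have hS : (xpow (m - 2) * aeval xAddInv (Chebyshev.S R (m - 2)) : 𝔸)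
      = Ψ - xpow (2 * m - 2) := by
    have h := xpow_sub_one_mul_aeval_S (R := R) (m := m) (m - 1)
    have hE : Ψ = evenPowSum (m - 1) + xpow (2 * (m - 1 : ℕ)) := by
      rw [evenPowSum, evenPowSum, ← Finset.sum_range_succ, Nat.sub_add_cancel hm]
    rw [hE, ← h]
    push_cast [Nat.cast_sub hm]
    ring_nf
  calc aeval (xAddInv : 𝔸) (Chebyshev.S R (m - 2))
      = xpow (2 - m) * (xpow (m - 2) * aeval xAddInv (Chebyshev.S R (m - 2))) := by
        rw [← mul_assoc, ← xpow_add, sub_add_sub_cancel', sub_self, xpow_zero, one_mul]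
    _ = xpow m * (xpow 2 * Ψ) - xpow m := by
        rw [hS, mul_sub, ← xpow_add, ← mul_assoc, ← xpow_add,
          xpow_eq_of_dvd_sub (a := 2 - m) (b := m + 2) ⟨-1, by ring⟩]
        ring_nf
    _ = xpow m * Ψ - xpow m := by rw [xpow_two_mul_evenPowSum]

theorem eq_sum_smul_xpow (a : 𝔸) : a = ∑ j : Fin (2 * m), a.coeff j • xpow (j : ℕ) := by
  conv_lhs => rw [← (AddMonoidAlgebra.basis (Fin (2 * m)) R).sum_repr a]
  simp only [AddMonoidAlgebra.basis_apply, xpow_val]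
  rfl

theorem sum_smul_xpow_mul_evenPowSum (r : Fin (2 * m) → R) :
    (∑ j, r j • xpow (j : ℕ) : 𝔸) * Ψ = (∑ j : Fin (2 * m) with Even j.val, r j) • Ψ
      + (∑ j : Fin (2 * m) with ¬Even j.val, r j) • (xpow 1 * Ψ) := by
  rw [Finset.sum_mul,
    ← Finset.sum_filter_add_sum_filter_not _ (fun j : Fin (2 * m) => Even j.val),
    Finset.sum_smul, Finset.sum_smul]
  congr 1 <;> refine Finset.sum_congr rfl fun j hj => ?_ <;> rw [Finset.mem_filter] at hj <;>
    rw [smul_mul_assoc, xpow_natCast_mul_evenPowSum]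
  · rw [Nat.even_iff.mp hj.2, Nat.cast_zero, xpow_zero, one_mul]
  · rw [Nat.odd_iff.mp (Nat.not_even_iff_odd.mp hj.2), Nat.cast_one]

theorem sum_single_eq_of_symm (b : Fin (2 * m) → R) (hb : ∀ i, b (-i) = b i) :
    (∑ j, single j (b j) : 𝔸)
      = ∑ j ∈ Finset.range m, b j • (xpow j + xpow (-j)) + b m • xpow m - b 0 • 1 := by
  set F : ℕ → 𝔸 := fun j => b j • xpow j
  set G : ℕ → 𝔸 := fun j => b j • xpow (-j)
  have hF : (∑ j, single j (b j) : 𝔸) = ∑ j ∈ Finset.range (m + m), F j := by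
    rw [← two_mul, ← Fin.sum_univ_eq_sum_range]
    simp only [F, Fin.cast_val_eq_self, single_eq_smul_xpow]
  have hreflect : ∀ k ∈ Finset.range m, F (m + (m - 1 - k)) = G (k + 1) := by
    intro k hkm
    have hk : k < m := Finset.mem_range.mp hkm
    have hcast : ((m + (m - 1 - k) : ℕ) : Fin (2 * m)) = -((k + 1 : ℕ) : Fin (2 * m)) := by
      refine eq_neg_of_add_eq_zero_left ?_
      rw [← Nat.cast_add, show m + (m - 1 - k) + (k + 1) = 2 * m by omega, CharP.cast_eq_zero]
    simp only [F, G, hcast, hb]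
    congr 1
    have hk1 : k ≤ m - 1 := by omega
    have hm1 : 1 ≤ m := by omega
    exact xpow_eq_of_dvd_sub ⟨1, by push_cast [Nat.cast_sub hk1, Nat.cast_sub hm1]; ring⟩
  have hG : ∑ k ∈ Finset.range m, G (k + 1)
      = ∑ j ∈ Finset.range m, G j + b m • xpow m - b 0 • 1 := by
    have h := Finset.sum_range_succ' G m
    rw [Finset.sum_range_succ] at h
    have hG0 : G 0 = b 0 • 1 := by simp [G, xpow_zero]
    have hGm : G m = b m • xpow m := by
      simp only [G, xpow_eq_of_dvd_sub (a := -m) (b := m) ⟨-1, by ring⟩]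
    rw [eq_sub_iff_add_eq, ← hG0, ← hGm, h]
  rw [hF, Finset.sum_range_add, ← Finset.sum_range_reflect (fun k => F (m + k)) m,
    Finset.sum_congr rfl hreflect, hG]
  simp only [F, G, smul_add, Finset.sum_add_distrib]
  abel

/-- The terms `b_j (X^j + X⁻ʲ)` are Chebyshev polynomials `C_j` in `X + X⁻¹`; the middle term
`X^m` is not, but `X^m ≡ -S_{m-2}(X + X⁻¹)` modulo `Ψ`. -/
theorem exists_sum_single_eq_aeval_add_mul (b : Fin (2 * m) → R) (hb : ∀ i, b (-i) = b i) :
    ∃ (h : R[X]) (c : 𝔸), (∑ j, single j (b j) : 𝔸) = aeval xAddInv h + c * Ψ := by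
  refine ⟨∑ j ∈ Finset.range m, b j • Chebyshev.C R j - b m • Chebyshev.S R (m - 2) - b 0 • 1,
    b m • xpow m, ?_⟩
  rw [sum_single_eq_of_symm b hb]
  simp only [map_sub, map_sum, map_smul, map_one, aeval_C_xAddInv, aeval_S_sub_two_eq,
    smul_mul_assoc, smul_sub]
  abel

theorem exists_aeval_eq_sum_add_mul [Nontrivial R] (g : R[X]) :
    ∃ c : 𝔸, aeval xAddInv g = ∑ k ∈ Finset.range (m - 1),
      (g %ₘ Chebyshev.S R (m - 1 : ℕ)).coeff k • xAddInv ^ k + c * Ψ := by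
  have hmon := Chebyshev.monic_S R (m - 1)
  have hdeg : (g %ₘ Chebyshev.S R (m - 1 : ℕ)).degree < (m - 1 : ℕ) :=
    (degree_modByMonic_lt g hmon).trans_le
      (degree_le_of_natDegree_le (Chebyshev.natDegree_S_le R _))
  refine ⟨xpow (1 - m) * aeval xAddInv (g /ₘ Chebyshev.S R (m - 1 : ℕ)), ?_⟩
  conv_lhs => rw [← modByMonic_add_div g (Chebyshev.S R (m - 1 : ℕ))]
  rw [map_add, map_mul, aeval_eq_sum_range_of_degree_lt hdeg, aeval_S_eq_xpow_mul_evenPowSum]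
  ring

def adaptedFamily : Fin 2 ⊕ (Fin (m - 1) × Fin 2) → AddMonoidAlgebra R (Fin (2 * m)) :=
  Sum.elim (fun ε => xpow (ε : ℕ) * evenPowSum m)
    fun kε => xpow (kε.2 : ℕ) * xAddInv ^ (kε.1 : ℕ)

theorem mul_evenPowSum_mem_span (a : 𝔸) :
    a * Ψ ∈ Submodule.span R (Set.range (adaptedFamily ∘ Sum.inl : Fin 2 → 𝔸)) := by
  rw [eq_sum_smul_xpow a, sum_smul_xpow_mul_evenPowSum]
  refine add_mem (Submodule.smul_mem _ _ (Submodule.subset_span ⟨0, ?_⟩))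
    (Submodule.smul_mem _ _ (Submodule.subset_span ⟨1, ?_⟩)) <;> simp [adaptedFamily, xpow_zero]

theorem xpow_mul_aeval_mem_span [Nontrivial R] (ε : Fin 2) (g : R[X]) :
    xpow (ε : ℕ) * aeval xAddInv g
      ∈ Submodule.span R (Set.range (adaptedFamily : _ → 𝔸)) := by
  obtain ⟨c, hc⟩ := exists_aeval_eq_sum_add_mul (m := m) g
  rw [hc, mul_add, Finset.mul_sum, ← mul_assoc]
  refine add_mem (Submodule.sum_mem _ fun k hk => ?_)
    (Submodule.span_mono (Set.range_comp_subset_range _ _) (mul_evenPowSum_mem_span _))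
  rw [mul_smul_comm]
  exact Submodule.smul_mem _ _
    (Submodule.subset_span ⟨.inr (⟨k, Finset.mem_range.mp hk⟩, ε), rfl⟩)

theorem exists_xpow_natCast_eq (n : ℕ) :
    ∃ g₁ g₂ : R[X], (xpow n : 𝔸) = xpow 1 * aeval xAddInv g₁ + aeval xAddInv g₂ := by
  induction n with
  | zero => exact ⟨0, 1, by simp [xpow_zero]⟩
  | succ n ih =>
    obtain ⟨g₁, g₂, h⟩ := ih
    have hsq : (xpow 1 * xpow 1 : 𝔸) = xpow 1 * xAddInv - 1 := by
      rw [xAddInv, mul_add, ← xpow_add, ← xpow_add, add_neg_cancel, xpow_zero,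
        add_sub_cancel_right]
    refine ⟨X * g₁ + g₂, -g₁, ?_⟩
    rw [Nat.cast_succ, add_comm, xpow_add, h, mul_add, ← mul_assoc, hsq]
    simp only [map_add, map_mul, map_neg, aeval_X]
    ring

theorem span_adaptedFamily [Nontrivial R] :
    Submodule.span R (Set.range (adaptedFamily : _ → 𝔸)) = ⊤ := by
  refine Submodule.eq_top_iff'.mpr fun a => ?_
  rw [eq_sum_smul_xpow a]
  refine Submodule.sum_mem _ fun j _ => Submodule.smul_mem _ _ ?_
  obtain ⟨g₁, g₂, h⟩ := exists_xpow_natCast_eq (R := R) (m := m) j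
  rw [h]
  exact add_mem (xpow_mul_aeval_mem_span 1 g₁)
    (by simpa [xpow_zero] using xpow_mul_aeval_mem_span (m := m) 0 g₂)

theorem card_eq_finrank [Nontrivial R] :
    Fintype.card (Fin 2 ⊕ (Fin (m - 1) × Fin 2)) = Module.finrank R 𝔸 := by
  rw [Module.finrank_eq_card_basis (AddMonoidAlgebra.basis (Fin (2 * m)) R)]
  simp only [Fintype.card_sum, Fintype.card_prod, Fintype.card_fin]
  have := pos_of_neZero_two_mul (m := m)
  omega

def adaptedBasis [Nontrivial R] : Module.Basis (Fin 2 ⊕ (Fin (m - 1) × Fin 2)) R 𝔸 :=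
  basisOfTopLeSpanOfCardEqFinrank adaptedFamily span_adaptedFamily.ge card_eq_finrank

theorem coe_adaptedBasis [Nontrivial R] :
    ⇑(adaptedBasis : Module.Basis _ R 𝔸) = adaptedFamily :=
  coe_basisOfTopLeSpanOfCardEqFinrank _ _ _

theorem mul_xpow_mul_pow_sub_mem_span [Nontrivial R] (h : R[X]) (c : 𝔸) (k : ℕ) (ε : Fin 2) :
    (aeval xAddInv h + c * Ψ) * (xpow (ε : ℕ) * xAddInv ^ k) - xpow (ε : ℕ) *
        ∑ k' ∈ Finset.range (m - 1),
          ((h * X ^ k) %ₘ Chebyshev.S R (m - 1 : ℕ)).coeff k' • xAddInv ^ k'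
      ∈ Submodule.span R (Set.range (adaptedFamily ∘ Sum.inl : Fin 2 → 𝔸)) := by
  obtain ⟨c', hc'⟩ := exists_aeval_eq_sum_add_mul (m := m) (h * X ^ k)
  rw [map_mul, map_pow, aeval_X] at hc'
  convert mul_evenPowSum_mem_span (xpow (ε : ℕ) * c' + c * xpow (ε : ℕ) * xAddInv ^ k) using 1
  linear_combination (xpow (ε : ℕ) : 𝔸) * hc'

theorem exists_det_mulLeft_eq [Nontrivial R] (b : Fin (2 * m) → R) (hb : ∀ i, b (-i) = b i) :
    ∃ u : R, LinearMap.det (LinearMap.mulLeft R (∑ j, single j (b j) : 𝔸))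
      = ((∑ j : Fin (2 * m) with Even j.val, b j) ^ 2
        - (∑ j : Fin (2 * m) with ¬Even j.val, b j) ^ 2) * u ^ 2 := by
  set p := ∑ j : Fin (2 * m) with Even j.val, b j with hp
  set q := ∑ j : Fin (2 * m) with ¬Even j.val, b j with hq
  have hf : (∑ j, single j (b j) : 𝔸) = ∑ j, b j • xpow (j : ℕ) :=
    Finset.sum_congr rfl fun j _ => single_eq_smul_xpow j (b j)
  obtain ⟨h, c, hhc⟩ := exists_sum_single_eq_aeval_add_mul b hb
  set H : Matrix (Fin (m - 1)) (Fin (m - 1)) R :=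
    .of fun k i => ((h * X ^ (i : ℕ)) %ₘ Chebyshev.S R (m - 1 : ℕ)).coeff k
  refine ⟨H.det, ?_⟩
  rw [LinearMap.det_eq_det_mul_det_of_basis_sum adaptedBasis _ !![p, q; q, p] (H ⊗ₖ 1) ?_ ?_]
  · rw [Matrix.det_fin_two_of, Matrix.det_kronecker]
    simp only [Fintype.card_fin, Matrix.det_one, one_pow, mul_one]
    ring
  · intro ε
    simp only [coe_adaptedBasis, adaptedFamily, Sum.elim_inl, Fin.sum_univ_two,
      LinearMap.mulLeft_apply]
    rw [mul_left_comm, hf, sum_smul_xpow_mul_evenPowSum, ← hp, ← hq]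
    fin_cases ε
    · simp [xpow_zero]
    · have h2 : (xpow 1 * (xpow 1 * Ψ) : 𝔸) = Ψ := by
        rw [← mul_assoc, ← xpow_add, one_add_one_eq_two, xpow_two_mul_evenPowSum]
      simp [mul_add, h2, xpow_zero, add_comm]
  · rintro ⟨k, ε⟩
    have hsum : ∑ kε' : Fin (m - 1) × Fin 2, (H ⊗ₖ 1) kε' (k, ε) • adaptedBasis (.inr kε')
        = xpow (ε : ℕ) * ∑ k' ∈ Finset.range (m - 1),
          ((h * X ^ (k : ℕ)) %ₘ Chebyshev.S R (m - 1 : ℕ)).coeff k' • (xAddInv : 𝔸) ^ k' := by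
      rw [← Fin.sum_univ_eq_sum_range fun k' =>
          ((h * X ^ (k : ℕ)) %ₘ Chebyshev.S R (m - 1 : ℕ)).coeff k' • (xAddInv : 𝔸) ^ k',
        Finset.mul_sum, Fintype.sum_prod_type]
      refine Finset.sum_congr rfl fun k' _ => ?_
      simp [coe_adaptedBasis, adaptedFamily, Matrix.one_apply, H]
    rw [hsum, LinearMap.mulLeft_apply, hhc, coe_adaptedBasis]
    exact mul_xpow_mul_pow_sub_mem_span h c k ε

end SymmetricCirculant

end

theorem stmt_5 (R : Type*) [CommRing R] (s : ℕ) (hs : 0 < s) (hse : Even s)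
    (b : Fin s → R) (hb : ∀ i : Fin s, b (-i) = b i) :
    ∃ u : R,
      Matrix.det (Matrix.of fun i j : Fin s => b (j - i))
        = (∑ i : Fin s, b i) * (∑ i : Fin s, (-1) ^ (i : ℕ) * b i) * u ^ 2 := by
  cases subsingleton_or_nontrivial R
  · exact ⟨0, Subsingleton.elim _ _⟩
  obtain ⟨m, rfl⟩ : ∃ m, s = 2 * m := ⟨s / 2, (Nat.two_mul_div_two_of_even hse).symm⟩
  have : NeZero (2 * m) := ⟨hs.ne'⟩
  obtain ⟨u, hu⟩ := SymmetricCirculant.exists_det_mulLeft_eq b hb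
  refine ⟨u, ?_⟩
  rw [← Matrix.det_transpose,
    show Matrix.transpose (Matrix.of fun i j : Fin (2 * m) => b (j - i)) = Matrix.circulant b
      from rfl, Matrix.det_circulant_eq_det_mulLeft, hu,
    Fin.sum_neg_one_pow_mul_eq_sub,
    ← Finset.sum_filter_add_sum_filter_not Finset.univ (fun j : Fin (2 * m) => Even j.val) b]
  ring
end

section
/- Let R be a commutative ring, s an odd positive integer, and b_0,...,b_{s-1} ∈ R with b_i = b_{s-i} for all 1 ≤ i ≤ s-1. Then there exists v ∈ R such that the determinant of the circulant matrix C(b_0,...,b_{s-1}) equals (∑_{i=0}^{s-1} b_i) · v². -/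
/-!
Write `s = 2m + 1`. All rows of the circulant matrix sum to `∑ bᵢ`, so subtracting the first row
from the others and then adding all columns to the first one splits off this factor, leaving the
`2m × 2m` matrix `(b (j - i) - b j)` indexed by the nonzero residues. Grouping the residues as
`±1, …, ±m` and using `b (-i) = b i` turns it into a block matrix `[[A, B], [B, A]]`, whose
determinant is `det (A + B) * det (A - B)`. Finally `det (A + B) = det (A - B)`: taking
consecutive differences of the rows of both matrices, the two results are transposes of each
other after the reindexing `k ↦ 1/2 - k` of `ℤ/(2m+1)`.
-/

namespace Matrix

variable {R : Type*} [CommRing R]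

theorem det_eq_mul_det_sub_row_zero {n : ℕ} (M : Matrix (Fin (n + 1)) (Fin (n + 1)) R) (c : R)
    (hM : ∀ i, ∑ j, M i j = c) :
    M.det = c * (of fun i j : Fin n => M i.succ j.succ - M 0 j.succ).det := by
  set A := M.updateCol 0 1
  have hA : M.det = c * A.det := by
    have h := M.det_updateCol_sum 0 1
    simp only [Pi.one_apply, one_smul, hM] at h
    rw [← h, ← det_updateCol_smul]
    congr 2
    ext
    simp
  let B : Matrix (Fin (n + 1)) (Fin (n + 1)) R :=
    of fun i j => A i j - (if i = 0 then 0 else 1) * A 0 j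
  have hAB : A.det = B.det :=
    det_eq_of_forall_row_eq_smul_add_const (fun i => if i = 0 then 0 else 1) 0 (by simp)
      fun i j => by simp [B]
  have hB : B.submatrix Fin.succ Fin.succ = of fun i j : Fin n => M i.succ j.succ - M 0 j.succ := by
    ext i j
    simp [B, A, updateCol_apply]
  rw [hA, hAB, det_succ_column_zero, Fin.sum_univ_succ, Finset.sum_eq_zero]
  · rw [Fin.succAbove_zero, hB]
    simp [B, A]
  · intro i _
    simp [B, A]

theorem det_of_sub_row_zero_eq_det_of_sub_row_pred {m : ℕ} (r : ℕ → Fin m → R) :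
    (of fun k l : Fin m => r (k + 1) l - r 0 l).det =
      (of fun k l : Fin m => r (k + 1) l - r k l).det := by
  cases m with
  | zero => simp
  | succ m =>
    exact det_eq_of_forall_row_eq_smul_add_pred (fun _ => 1) (fun j => by simp)
      fun i j => by simp

theorem det_fromBlocks_self_swap {n : Type*} [Fintype n] [DecidableEq n] (A B : Matrix n n R) :
    (fromBlocks A B B A).det = (A + B).det * (A - B).det := by
  have key : fromBlocks 1 0 (-1) 1 * fromBlocks A B B A * fromBlocks 1 0 1 1 =
      fromBlocks (A + B) B 0 (A - B) := by
    simp only [fromBlocks_multiply]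
    congr 1 <;> noncomm_ring
  simpa [det_mul, det_fromBlocks_zero₁₂, det_fromBlocks_zero₂₁] using congrArg det key

end Matrix

namespace OddCirculant

open Fin.CommRing Fin.NatCast Matrix

variable {m : ℕ}

def posRep (k : Fin m) : Fin (2 * m + 1) := ((k : ℕ) + 1 : ℕ)

theorem val_posRep (k : Fin m) : (posRep k : ℕ) = k + 1 := by
  rw [posRep, Fin.val_natCast, Nat.mod_eq_of_lt (by omega)]

theorem natCast_val_add_one (k : Fin m) :
    (((k : ℕ) + 1 : ℕ) : Fin (2 * m + 1)) = posRep k := rfl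

theorem natCast_val (k : Fin m) : ((k : ℕ) : Fin (2 * m + 1)) = posRep k - 1 := by
  rw [posRep, Nat.cast_succ, add_sub_cancel_right]

theorem posRep_rev (k : Fin m) :
    posRep k.rev = ((m + 1 : ℕ) : Fin (2 * m + 1)) - posRep k := by
  rw [eq_sub_iff_add_eq, posRep, posRep, ← Nat.cast_add, Fin.val_rev]
  congr 1
  omega

theorem natCast_half_add_self :
    ((m + 1 : ℕ) : Fin (2 * m + 1)) + ((m + 1 : ℕ) : Fin (2 * m + 1)) = 1 := by
  rw [← Nat.cast_add, show m + 1 + (m + 1) = (2 * m + 1) + 1 by ring, Nat.cast_add,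
    Fin.natCast_self, zero_add, Nat.cast_one]

/-- `inl k` and `inr k` correspond to the residues `k + 1` and `-(k + 1)` after `Fin.succ`. -/
def signedSplit (m : ℕ) : Fin m ⊕ Fin m ≃ Fin (2 * m) :=
  (Equiv.sumCongr (Equiv.refl _) Fin.revPerm).trans
    (finSumFinEquiv.trans (finCongr (two_mul m).symm))

theorem succ_signedSplit_inl (k : Fin m) : (signedSplit m (.inl k)).succ = posRep k := by
  ext
  simp [signedSplit, val_posRep]

theorem succ_signedSplit_inr (k : Fin m) : (signedSplit m (.inr k)).succ = -posRep k := by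
  rw [eq_neg_iff_add_eq_zero, Fin.ext_iff, Fin.val_add, Fin.val_zero]
  simp [signedSplit, val_posRep, show m - (k + 1) + m + 1 + (k + 1) = 2 * m + 1 by omega]

variable {R : Type*} [CommRing R] (b : Fin (2 * m + 1) → R)

def diagBlock : Matrix (Fin m) (Fin m) R :=
  of fun k l => b (posRep l - posRep k) - b (posRep l)

def offDiagBlock : Matrix (Fin m) (Fin m) R :=
  of fun k l => b (posRep l + posRep k) - b (posRep l)

theorem det_reduced_eq_det_diagBlock_add_mul_det_sub (hb : ∀ i, b (-i) = b i) :
    (of fun i j : Fin (2 * m) => b (j.succ - i.succ) - b j.succ).det =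
      (diagBlock b + offDiagBlock b).det * (diagBlock b - offDiagBlock b).det := by
  have hblocks : (of fun i j : Fin (2 * m) => b (j.succ - i.succ) - b j.succ).submatrix
      (signedSplit m) (signedSplit m) =
      fromBlocks (diagBlock b) (offDiagBlock b) (offDiagBlock b) (diagBlock b) := by
    ext (k | k) (l | l) <;>
      simp only [submatrix_apply, of_apply, fromBlocks_apply₁₁, fromBlocks_apply₁₂,
        fromBlocks_apply₂₁, fromBlocks_apply₂₂, succ_signedSplit_inl, succ_signedSplit_inr,
        diagBlock, offDiagBlock]
    · rw [← neg_add', hb, hb]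
    · rw [sub_neg_eq_add]
    · rw [show -posRep l - -posRep k = -(posRep l - posRep k) by abel, hb, hb]
  rw [← det_submatrix_equiv_self (signedSplit m), hblocks, det_fromBlocks_self_swap]

theorem det_diagBlock_add_offDiagBlock (hb : ∀ i, b (-i) = b i) :
    (diagBlock b + offDiagBlock b).det = (diagBlock b - offDiagBlock b).det := by
  let r : ℕ → Fin m → R := fun j l => b (posRep l - j) + b (posRep l + j)
  let t : ℕ → Fin m → R := fun j l => b (posRep l - j) - b (posRep l + j)
  have hadd : diagBlock b + offDiagBlock b = of fun k l : Fin m => r (k + 1) l - r 0 l := by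
    ext
    simp only [r, diagBlock, offDiagBlock, Matrix.add_apply, of_apply, natCast_val_add_one,
      Nat.cast_zero, sub_zero, add_zero]
    ring
  have hsub : diagBlock b - offDiagBlock b = of fun k l : Fin m => t (k + 1) l - t 0 l := by
    ext
    simp [t, diagBlock, offDiagBlock, posRep]
  have hrev : (of fun k l : Fin m => r (k + 1) l - r k l) =
      ((of fun k l : Fin m => t (k + 1) l - t k l).submatrix Fin.rev Fin.rev)ᵀ := by
    ext k l
    simp only [of_apply, transpose_apply, submatrix_apply, r, t, natCast_val_add_one, natCast_val,
      posRep_rev]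
    have hh := natCast_half_add_self (m := m)
    generalize posRep k = p, posRep l = q, ((m + 1 : ℕ) : Fin (2 * m + 1)) = h at hh ⊢
    rw [show h - p - (h - q) = q - p by ring,
      show h - p + (h - q) = -(q + (p - 1)) by linear_combination hh,
      show h - p - (h - q - 1) = q - (p - 1) by ring,
      show h - p + (h - q - 1) = -(q + p) by linear_combination hh, hb, hb]
    ring
  rw [hadd, hsub, det_of_sub_row_zero_eq_det_of_sub_row_pred,
    det_of_sub_row_zero_eq_det_of_sub_row_pred, hrev, det_transpose]
  exact det_submatrix_equiv_self Fin.revPerm _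

end OddCirculant

theorem stmt_6_general (R : Type*) [CommRing R] (s : ℕ) (hso : Odd s)
    (b : Fin s → R) (hb : ∀ i : Fin s, b (-i) = b i) :
    ∃ v : R,
      Matrix.det (Matrix.of fun i j : Fin s => b (j - i))
        = (∑ i : Fin s, b i) * v ^ 2 := by
  obtain ⟨m, rfl⟩ := hso
  have hrow : ∀ i, ∑ j, Matrix.of (fun i j : Fin (2 * m + 1) => b (j - i)) i j = ∑ j, b j :=
    fun i => (Equiv.subRight i).sum_comp b
  refine ⟨(OddCirculant.diagBlock b - OddCirculant.offDiagBlock b).det, ?_⟩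
  rw [Matrix.det_eq_mul_det_sub_row_zero _ _ hrow]
  simp only [Matrix.of_apply, sub_zero]
  rw [OddCirculant.det_reduced_eq_det_diagBlock_add_mul_det_sub b hb,
    OddCirculant.det_diagBlock_add_offDiagBlock b hb, sq]

theorem stmt_6 (R : Type*) [CommRing R] (s : ℕ) (hs : 0 < s) (hso : Odd s)
    (b : Fin s → R) (hb : ∀ i : Fin s, b (-i) = b i) :
    ∃ v : R,
      Matrix.det (Matrix.of fun i j : Fin s => b (j - i))
        = (∑ i : Fin s, b i) * v ^ 2 :=
  stmt_6_general R s hso b hb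
end

section
/- Let F_q be a finite field with q elements, q odd, of characteristic p. Let k be an integer with 1 < k ≤ q-1 and k | q-1, and let a_1,...,a_k be the k-th roots of unity in F_q. Define D_k = [(a_i + a_j)^{(q-3)/2}]_{1≤i,j≤k}. Then det D_k = (-1)^{(k+1)(q-3)/2} · w_k · k^k, where w_k = ∏_{s=0}^{k-1} ∑_{r=0}^{⌊(q-3-2s)/(2k)⌋} binom((q-3)/2, s+rk), all computed in F_p ⊆ F_q. -/
/-!
Write `m = (q - 3) / 2`. Since every `a j` is a `k`-th root of unity, `(a i + a j) ^ m` only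
depends on `(X + 1) ^ m` modulo `X ^ k - 1`, whose coefficients `c s` are the sums of binomial
coefficients in the statement. This factors the matrix as
`V(a) · diag(c) · V(a⁻¹)ᵀ · diag(a ^ m)` with Vandermonde matrices `V`. Orthogonality of the
characters of the group of `k`-th roots of unity gives `V(a)ᵀ V(a⁻¹) = k · 1`, and comparing
constant coefficients in `∏ (X - a i) = X ^ k - 1` gives `∏ a i = (-1) ^ (k + 1)`.
-/

open Finset Polynomial Matrix Function

theorem sum_range_succ_eq_sum_residue_classes {M : Type*} [AddCommMonoid M] {k m : ℕ}
    (hk : 0 < k) {f : ℕ → M} (hf : ∀ t, m < t → f t = 0) :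
    ∑ t ∈ range (m + 1), f t = ∑ s ∈ range k, ∑ r ∈ range ((m - s) / k + 1), f (s + r * k) := by
  rw [sum_sigma']
  refine sum_bij_ne_zero (fun t _ _ => ⟨t % k, t / k⟩) ?_ ?_ ?_ ?_
  · intro t ht _
    have hdecomp := Nat.mod_add_div' t k
    simp only [mem_sigma, mem_range] at ht ⊢
    exact ⟨Nat.mod_lt _ hk, Nat.lt_succ_of_le ((Nat.le_div_iff_mul_le hk).2 (by omega))⟩
  · intro t₁ _ _ t₂ _ _ h
    simp only [Sigma.mk.injEq, heq_eq_eq] at h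
    rw [← Nat.mod_add_div' t₁ k, ← Nat.mod_add_div' t₂ k, h.1, h.2]
  · rintro ⟨s, r⟩ hsr hne
    simp only [mem_sigma, mem_range] at hsr
    dsimp only at hne
    have hle : s + r * k ≤ m := by
      by_contra h
      exact hne (hf _ (by omega))
    refine ⟨s + r * k, mem_range.2 (by omega), hne, ?_⟩
    simp [Nat.add_mul_div_right _ _ hk, Nat.mod_eq_of_lt hsr.1, Nat.div_eq_of_lt hsr.1]
  · intro t _ _
    rw [Nat.mod_add_div']

/-- For `s < k` this is `∑ t ≤ m with t ≡ s [MOD k], m.choose t`, the coefficient of `X ^ s` in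
`(X + 1) ^ m` reduced modulo `X ^ k - 1`. -/
def chooseResidueSum (m k s : ℕ) : ℕ :=
  ∑ r ∈ range ((m - s) / k + 1), m.choose (s + r * k)

section RootsOfUnity

variable {F : Type*} [Field F] {k : ℕ} {a : Fin k → F}

theorem sum_zpow_eq_ite_of_roots_of_unity (hk : 0 < k) (ha : Injective a)
    (hroot : ∀ i, a i ^ k = 1) (n : ℤ) :
    ∑ i, a i ^ n = if (k : ℤ) ∣ n then (k : F) else 0 := by
  classical
  -- `a` enumerates the cyclic group of `k`-th roots of unity, so this is character orthogonality.
  have : NeZero k := ⟨hk.ne'⟩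
  let G := rootsOfUnity k F
  let := Fintype.ofFinite G
  let u : Fin k → G := fun i => rootsOfUnity.mkOfPowEq (a i) (hroot i)
  have hu_inj : Injective u := fun i j h => ha <| by
    simpa [u] using congrArg (fun g : G => ((g : Fˣ) : F)) h
  have hcard : Nat.card G = k :=
    le_antisymm (card_rootsOfUnity F k) (by simpa using Nat.card_le_card_of_injective u hu_inj)
  have hu : Bijective u := (Fintype.bijective_iff_injective_and_card u).2
    ⟨hu_inj, by rw [Fintype.card_fin, ← Nat.card_eq_fintype_card, hcard]⟩
  let χ : G →* F := ((Units.coeHom F).comp G.subtype).comp (zpowGroupHom n)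
  have hχ : χ = 1 ↔ (k : ℤ) ∣ n := by
    rw [← hcard, ← IsCyclic.exponent_eq_card, Group.exponent_dvd_iff_forall_zpow_eq_one,
      DFunLike.ext_iff]
    simp [χ, Subtype.ext_iff, Units.ext_iff]
  calc ∑ i, a i ^ n = ∑ i, χ (u i) := by simp [χ, u]
    _ = ∑ g, χ g := hu.sum_comp χ
    _ = _ := by
      simp only [sum_hom_units χ, hχ, ← Nat.card_eq_fintype_card, hcard, apply_ite Nat.cast,
        Nat.cast_zero]

theorem vandermonde_transpose_mul_vandermonde_inv (hk : 0 < k) (ha : Injective a)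
    (hroot : ∀ i, a i ^ k = 1) :
    (vandermonde a)ᵀ * vandermonde (fun i => (a i)⁻¹) =
      (k : F) • (1 : Matrix (Fin k) (Fin k) F) := by
  ext s t
  have ha0 : ∀ i, a i ≠ 0 := fun i h => by simpa [h, zero_pow hk.ne'] using hroot i
  have hpow : ∀ i, a i ^ (s : ℕ) * (a i)⁻¹ ^ (t : ℕ) = a i ^ ((s : ℤ) - t) := fun i => by
    rw [zpow_sub₀ (ha0 i), zpow_natCast, zpow_natCast, inv_pow, div_eq_mul_inv]
  have hdvd : (k : ℤ) ∣ (s : ℤ) - t ↔ s = t := by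
    refine ⟨fun h => Fin.ext ?_, fun h => by simp [h]⟩
    have := Int.eq_zero_of_abs_lt_dvd h (abs_sub_lt_iff.2 ⟨by omega, by omega⟩)
    omega
  rw [mul_apply]
  simp only [transpose_apply, vandermonde_apply, hpow,
    sum_zpow_eq_ite_of_roots_of_unity hk ha hroot, hdvd, Matrix.smul_apply, one_apply, smul_eq_mul,
    mul_ite, mul_one, mul_zero]

theorem prod_X_sub_C_eq_X_pow_sub_one (hk : 0 < k) (ha : Injective a) (hroot : ∀ i, a i ^ k = 1) :
    ∏ i, (X - C (a i)) = X ^ k - 1 := by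
  classical
  have hmonic : (∏ i, (X - C (a i))).Monic := Lagrange.nodal_monic
  have hdeg : (∏ i, (X - C (a i))).degree = (k : WithBot ℕ) :=
    Lagrange.degree_nodal.trans (by rw [card_univ, Fintype.card_fin])
  have hC : (X ^ k - 1 : F[X]) = X ^ k - C 1 := by rw [map_one]
  refine Polynomial.eq_of_degree_le_of_eval_finset_eq (univ.image a) ?_ ?_ ?_ ?_
  · rw [hdeg, card_image_of_injective _ ha, card_univ, Fintype.card_fin]
  · rw [hdeg, hC, degree_X_pow_sub_C hk]
  · rw [hmonic.leadingCoeff, hC, (monic_X_pow_sub_C (1 : F) hk.ne').leadingCoeff]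
  · simp only [mem_image, mem_univ, true_and, forall_exists_index, forall_apply_eq_imp_iff]
    intro i
    simp [eval_prod, hroot, prod_eq_zero (mem_univ i)]

theorem prod_eq_neg_one_pow (hk : 0 < k) (ha : Injective a) (hroot : ∀ i, a i ^ k = 1) :
    ∏ i, a i = (-1) ^ (k + 1) := by
  have h := congrArg (Polynomial.eval 0) (prod_X_sub_C_eq_X_pow_sub_one hk ha hroot)
  simp only [eval_prod, eval_sub, eval_X, eval_C, eval_pow, eval_one, zero_pow hk.ne', zero_sub,
    prod_neg, card_univ, Fintype.card_fin] at h
  calc ∏ i, a i = (-1) ^ k * ((-1) ^ k * ∏ i, a i) := by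
        rw [← mul_assoc, ← mul_pow, neg_one_mul, neg_neg, one_pow, one_mul]
    _ = (-1) ^ (k + 1) := by rw [h, pow_succ, mul_neg_one]

theorem add_one_pow_eq_sum_chooseResidueSum (hk : 0 < k) {z : F} (hz : z ^ k = 1) (m : ℕ) :
    (z + 1) ^ m = ∑ s ∈ range k, (chooseResidueSum m k s : F) * z ^ s := by
  have hchoose : ∀ t, m < t → z ^ t * (m.choose t : F) = 0 := fun t ht => by
    rw [Nat.choose_eq_zero_of_lt ht, Nat.cast_zero, mul_zero]
  simp only [add_pow, one_pow, mul_one, sum_range_succ_eq_sum_residue_classes hk hchoose,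
    chooseResidueSum, Nat.cast_sum, sum_mul]
  refine sum_congr rfl fun s _ => sum_congr rfl fun r _ => ?_
  rw [pow_add, pow_mul', hz, one_pow, mul_one, mul_comm]

theorem add_pow_eq_sum_chooseResidueSum (hk : 0 < k) {x y : F} (hx : x ^ k = 1) (hy : y ^ k = 1)
    (m : ℕ) :
    (x + y) ^ m = ∑ s ∈ range k, (chooseResidueSum m k s : F) * x ^ s * (y⁻¹ ^ s * y ^ m) := by
  have hy0 : y ≠ 0 := fun h => by simp [h, zero_pow hk.ne'] at hy
  have hxy : (x * y⁻¹) ^ k = 1 := by rw [mul_pow, inv_pow, hx, hy, inv_one, mul_one]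
  calc (x + y) ^ m = (x * y⁻¹ + 1) ^ m * y ^ m := by
        rw [← mul_pow, add_mul, one_mul, inv_mul_cancel_right₀ hy0]
    _ = _ := by
        rw [add_one_pow_eq_sum_chooseResidueSum hk hxy, sum_mul]
        refine sum_congr rfl fun s _ => ?_
        ring

theorem of_add_pow_eq_vandermonde_mul (hk : 0 < k) (hroot : ∀ i, a i ^ k = 1) (m : ℕ) :
    of (fun i j => (a i + a j) ^ m) =
      vandermonde a * diagonal (fun s : Fin k => (chooseResidueSum m k s : F)) *
        (vandermonde fun i => (a i)⁻¹)ᵀ * diagonal (fun j => a j ^ m) := by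
  ext i j
  rw [mul_diagonal, mul_apply, of_apply, add_pow_eq_sum_chooseResidueSum hk (hroot i) (hroot j),
    ← Fin.sum_univ_eq_sum_range, sum_mul]
  refine sum_congr rfl fun s _ => ?_
  simp only [mul_diagonal, vandermonde_apply, transpose_apply]
  ring

theorem det_of_add_pow (hk : 0 < k) (ha : Injective a) (hroot : ∀ i, a i ^ k = 1) (m : ℕ) :
    det (of fun i j => (a i + a j) ^ m) =
      (-1) ^ ((k + 1) * m) * (∏ s ∈ range k, (chooseResidueSum m k s : F)) * (k : F) ^ k := by
  have hvdm := congrArg det (vandermonde_transpose_mul_vandermonde_inv hk ha hroot)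
  rw [det_mul, det_transpose, det_smul, det_one, Fintype.card_fin, mul_one] at hvdm
  rw [of_add_pow_eq_vandermonde_mul hk hroot, det_mul, det_mul, det_mul, det_diagonal,
    det_diagonal, det_transpose, prod_pow, prod_eq_neg_one_pow hk ha hroot, ← pow_mul,
    Fin.prod_univ_eq_prod_range (fun s => (chooseResidueSum m k s : F)), ← hvdm]
  ring

end RootsOfUnity

theorem stmt_7_general (F : Type*) [Field F] (q k : ℕ)
    (hk1 : 1 < k)
    (a : Fin k → F) (ha : Function.Injective a) (hroot : ∀ i, a i ^ k = 1) :
    Matrix.det (Matrix.of fun i j : Fin k => (a i + a j) ^ ((q - 3) / 2))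
      = (-1) ^ ((k + 1) * ((q - 3) / 2)) *
        (∏ s ∈ Finset.range k, ∑ r ∈ Finset.range ((q - 3 - 2 * s) / (2 * k) + 1),
          (Nat.choose ((q - 3) / 2) (s + r * k) : F)) *
        (k : F) ^ k := by
  have hbound (s : ℕ) : (q - 3 - 2 * s) / (2 * k) = ((q - 3) / 2 - s) / k := by
    rw [← Nat.div_div_eq_div_mul]
    congr 1
    omega
  simpa only [hbound, chooseResidueSum, Nat.cast_sum] using
    det_of_add_pow (by omega) ha hroot ((q - 3) / 2)

theorem stmt_7 (F : Type*) [Field F] [Fintype F] (q k : ℕ)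
    (hq : Fintype.card F = q) (hodd : Odd q)
    (hk1 : 1 < k) (hk2 : k ≤ q - 1) (hdvd : k ∣ q - 1)
    (a : Fin k → F) (ha : Function.Injective a) (hroot : ∀ i, a i ^ k = 1) :
    Matrix.det (Matrix.of fun i j : Fin k => (a i + a j) ^ ((q - 3) / 2))
      = (-1) ^ ((k + 1) * ((q - 3) / 2)) *
        (∏ s ∈ Finset.range k, ∑ r ∈ Finset.range ((q - 3 - 2 * s) / (2 * k) + 1),
          (Nat.choose ((q - 3) / 2) (s + r * k) : F)) *
        (k : F) ^ k :=
  stmt_7_general F q k hk1 a ha hroot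
end

section
/- Let F_q be a finite field with q ≡ 1 (mod 4) elements, of odd characteristic p. Let a_1,...,a_{(q-1)/2} be all nonzero squares in F_q. Then det[(a_i + a_j)^{(q-3)/2}]_{1≤i,j≤(q-1)/2} = (-1)^{(q+3)/4} · u² in F_q, where u = ∏_{s=0}^{(q-5)/4} binom((q-3)/2, s) reduced mod p. -/
/-!
Write `n = (q - 1) / 2`; the nonzero squares are exactly the `n`-th roots of unity. Expanding
`(a_i + a_j)^(n-1)` binomially factors the matrix as `V · diag(C(n-1, k)) · W` with
`V = (a_i^k)` and `W = (a_j^(n-1-k))`, and `V W` is diagonal with entries `n a_i^(n-1)` because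
`∑_k x^k y^(n-1-k) = (x^n - y^n) / (x - y)` vanishes for distinct roots of unity.
The symmetry `C(n-1, k) = C(n-1, n-1-k)` makes the binomial product a square, Vieta for `X^n - 1`
gives `∏ a_i = -1`, and `n = -1/2` in `F_q` gives `n^n = 2^(-n) = (2 / F_q) = (-1)^((q-1)/4)`.
-/

open Finset Matrix Polynomial

theorem det_of_add_pow_sub_one {R : Type*} [CommRing R] {n : ℕ} (a b : Fin n → R) :
    det (of fun i j : Fin n => (a i + b j) ^ (n - 1)) =
      (∏ k : Fin n, ((n - 1).choose k : R)) *
        det (of fun i j : Fin n => ∑ k : Fin n, a i ^ (k : ℕ) * b j ^ (n - 1 - k)) := by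
  let A : Matrix (Fin n) (Fin n) R := of fun i k => a i ^ (k : ℕ)
  let C : Matrix (Fin n) (Fin n) R := of fun k j => b j ^ (n - 1 - k)
  let D : Matrix (Fin n) (Fin n) R := diagonal fun k => ((n - 1).choose k : R)
  have hM : (of fun i j : Fin n => (a i + b j) ^ (n - 1)) = A * (D * C) := by
    ext i j
    have hn : n - 1 + 1 = n := Nat.succ_pred_eq_of_pos i.pos
    rw [of_apply, add_pow, hn, mul_apply,
      ← Fin.sum_univ_eq_sum_range (fun k => a i ^ k * b j ^ (n - 1 - k) * ((n - 1).choose k : R))]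
    exact sum_congr rfl fun k _ => by simp only [A, C, D, diagonal_mul, of_apply]; ring
  rw [hM, det_mul, det_mul, det_diagonal, mul_left_comm, ← det_mul]
  rfl

theorem sum_pow_mul_pow_eq_zero {R : Type*} [CommRing R] [IsDomain R] {n : ℕ} {x y : R}
    (hxy : x ≠ y) (hx : x ^ n = 1) (hy : y ^ n = 1) :
    ∑ k ∈ range n, x ^ k * y ^ (n - 1 - k) = 0 := by
  have h := geom_sum₂_mul x y n
  rw [hx, hy, sub_self] at h
  exact (mul_eq_zero.mp h).resolve_right (sub_ne_zero.mpr hxy)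

theorem det_of_add_pow_sub_one_of_pow_eq_one {R : Type*} [CommRing R] [IsDomain R] {n : ℕ}
    (a : Fin n → R) (ha : Function.Injective a) (h1 : ∀ i, a i ^ n = 1) :
    det (of fun i j : Fin n => (a i + a j) ^ (n - 1)) =
      (∏ k : Fin n, ((n - 1).choose k : R)) * ∏ i, (n * a i ^ (n - 1)) := by
  have hdiag : (of fun i j : Fin n => ∑ k : Fin n, a i ^ (k : ℕ) * a j ^ (n - 1 - k)) =
      diagonal fun i => n * a i ^ (n - 1) := by
    ext i j
    rw [of_apply, Fin.sum_univ_eq_sum_range (fun k => a i ^ k * a j ^ (n - 1 - k))]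
    rcases eq_or_ne i j with rfl | hij
    · have hexp : ∀ k ∈ range n, a i ^ k * a i ^ (n - 1 - k) = a i ^ (n - 1) := fun k hk => by
        rw [← pow_add, Nat.add_sub_cancel' (Nat.le_sub_one_of_lt (mem_range.mp hk))]
      rw [diagonal_apply_eq, sum_congr rfl hexp, sum_const, card_range, nsmul_eq_mul]
    · rw [diagonal_apply_ne _ hij, sum_pow_mul_pow_eq_zero (ha.ne hij) (h1 i) (h1 j)]
  rw [det_of_add_pow_sub_one, hdiag, det_diagonal]

theorem prod_eq_neg_one_pow_of_injective_of_pow_eq_one {F : Type*} [Field F] {n : ℕ}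
    (hn : 0 < n) (a : Fin n → F) (ha : Function.Injective a) (h1 : ∀ i, a i ^ n = 1) :
    ∏ i, a i = (-1) ^ (n + 1) := by
  have hmonic : (X ^ n - 1 : F[X]).Monic := monic_X_pow_sub_C 1 hn.ne'
  have hfactor : X ^ n - 1 = ∏ i, (X - C (a i)) := by
    refine eq_of_monic_of_dvd_of_natDegree_le (monic_prod_of_monic _ _ fun i _ => monic_X_sub_C _)
      hmonic (Fintype.prod_dvd_of_coprime (pairwise_coprime_X_sub_C ha) fun i => ?_) ?_
    · rw [dvd_iff_isRoot, IsRoot, eval_sub, eval_pow, eval_X, eval_one, h1, sub_self]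
    · rw [natDegree_prod_of_monic _ _ fun i _ => monic_X_sub_C _]
      simp only [natDegree_X_sub_C, sum_const, card_univ, Fintype.card_fin, smul_eq_mul, mul_one]
      rw [← C_1, natDegree_X_pow_sub_C]
  have h0 := congrArg (eval 0) hfactor
  simp only [eval_sub, eval_pow, eval_X, eval_one, eval_prod, eval_C, zero_sub, prod_neg,
    card_univ, Fintype.card_fin] at h0
  rw [zero_pow hn.ne'] at h0
  have hsq : ((-1 : F) ^ n) ^ 2 = 1 := by rw [← pow_mul, mul_comm, pow_mul, neg_one_sq, one_pow]
  linear_combination -(-1) ^ n * h0 - (∏ i, a i) * hsq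

theorem prod_range_choose_eq_sq {R : Type*} [CommSemiring R] (t : ℕ) :
    ∏ s ∈ range (2 * t), ((2 * t - 1).choose s : R) =
      (∏ s ∈ range t, ((2 * t - 1).choose s : R)) ^ 2 := by
  rw [two_mul, prod_range_add, sq]
  congr 1
  rw [← prod_range_reflect]
  refine prod_congr rfl fun s hs => ?_
  rw [mem_range] at hs
  rw [← Nat.choose_symm (by omega)]
  congr 2
  omega

namespace FiniteField

variable {F : Type*} [Field F] [Fintype F]

theorem ringChar_ne_two_of_card_mod_four_eq_one (h : Fintype.card F % 4 = 1) : ringChar F ≠ 2 :=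
  fun h2 => by have := even_card_iff_char_two.mp h2; omega

theorem two_pow_card_div_two_of_card_mod_four_eq_one (h : Fintype.card F % 4 = 1) :
    (2 : F) ^ (Fintype.card F / 2) = (-1) ^ (Fintype.card F / 4) := by
  have hF := ringChar_ne_two_of_card_mod_four_eq_one h
  have h2 : (2 : F) ≠ 0 := Ring.two_ne_zero hF
  rcases Nat.even_or_odd (Fintype.card F / 4) with he | ho
  · have hsq : IsSquare (2 : F) := isSquare_two_iff.mpr (by obtain ⟨c, hc⟩ := he; omega)
    rw [he.neg_one_pow]
    exact (isSquare_iff hF h2).mp hsq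
  · have hsq : ¬IsSquare (2 : F) := by
      rw [isSquare_two_iff]; obtain ⟨c, hc⟩ := ho; omega
    rw [ho.neg_one_pow]
    exact (pow_dichotomy hF h2).resolve_left (mt (isSquare_iff hF h2).mpr hsq)

theorem cast_card_div_two_pow_of_card_mod_four_eq_one (h : Fintype.card F % 4 = 1) :
    ((Fintype.card F / 2 : ℕ) : F) ^ (Fintype.card F / 2) = (-1) ^ (Fintype.card F / 4) := by
  set n := Fintype.card F / 2
  have htwo : (2 : F) * n = -1 := by
    have hcast : ((2 * n + 1 : ℕ) : F) = 0 := by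
      rw [show 2 * n + 1 = Fintype.card F by omega, cast_card_eq_zero]
    push_cast at hcast
    linear_combination hcast
  have heven : Even n := ⟨Fintype.card F / 4, by omega⟩
  have hprod : (2 : F) ^ n * (n : F) ^ n = 1 := by rw [← mul_pow, htwo, heven.neg_one_pow]
  rw [two_pow_card_div_two_of_card_mod_four_eq_one h] at hprod
  have hsq : ((-1 : F) ^ (Fintype.card F / 4)) ^ 2 = 1 := by
    rw [← pow_mul, mul_comm, pow_mul, neg_one_sq, one_pow]
  linear_combination (-1 : F) ^ (Fintype.card F / 4) * hprod - (n : F) ^ n * hsq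

end FiniteField

open FiniteField

theorem stmt_8 (F : Type*) [Field F] [Fintype F] (q : ℕ)
    (hq : Fintype.card F = q) (h4 : q % 4 = 1)
    (a : Fin ((q - 1) / 2) → F) (ha : Function.Injective a)
    (hsq : ∀ x : F, (∃ i, a i = x) ↔ x ≠ 0 ∧ ∃ y : F, y ^ 2 = x) :
    Matrix.det (Matrix.of fun i j : Fin ((q - 1) / 2) => (a i + a j) ^ ((q - 3) / 2))
      = (-1) ^ ((q + 3) / 4) *
        (∏ s ∈ Finset.range ((q - 5) / 4 + 1), (Nat.choose ((q - 3) / 2) s : F)) ^ 2 := by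
  subst hq
  have hF := ringChar_ne_two_of_card_mod_four_eq_one h4
  have hq5 : 5 ≤ Fintype.card F := by have := Fintype.one_lt_card (α := F); omega
  rw [show (Fintype.card F - 3) / 2 = (Fintype.card F - 1) / 2 - 1 by omega,
    show (Fintype.card F - 5) / 4 + 1 = Fintype.card F / 4 by omega,
    show (Fintype.card F + 3) / 4 = Fintype.card F / 4 + 1 by omega]
  generalize hn : (Fintype.card F - 1) / 2 = n at a ha hsq ⊢
  have hroot : ∀ i, a i ^ n = 1 := fun i => by
    obtain ⟨ha0, y, hy⟩ := (hsq (a i)).mp ⟨i, rfl⟩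
    rw [← hn, show (Fintype.card F - 1) / 2 = Fintype.card F / 2 by omega]
    exact (isSquare_iff hF ha0).mp ⟨y, by rw [← hy, sq]⟩
  have hprod : ∏ i, a i ^ (n - 1) = -1 := by
    rw [prod_pow, prod_eq_neg_one_pow_of_injective_of_pow_eq_one (by omega) a ha hroot, ← pow_mul]
    exact Odd.neg_one_pow
      (Nat.odd_mul.mpr ⟨⟨Fintype.card F / 4, by omega⟩, ⟨(Fintype.card F - 5) / 4, by omega⟩⟩)
  have hchoose : ∏ k : Fin n, ((n - 1).choose k : F) =
      (∏ s ∈ range (Fintype.card F / 4), ((n - 1).choose s : F)) ^ 2 := by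
    rw [Fin.prod_univ_eq_prod_range (fun k => ((n - 1).choose k : F)),
      show n = 2 * (Fintype.card F / 4) by omega]
    exact prod_range_choose_eq_sq _
  have hpow : (n : F) ^ n = (-1) ^ (Fintype.card F / 4) := by
    rw [← hn, show (Fintype.card F - 1) / 2 = Fintype.card F / 2 by omega]
    exact cast_card_div_two_pow_of_card_mod_four_eq_one h4
  rw [det_of_add_pow_sub_one_of_pow_eq_one a ha hroot, prod_mul_distrib, prod_const, card_univ,
    Fintype.card_fin, hprod, hchoose, hpow]
  ring
end

section
/- Let F_q be a finite field with q elements where q ≡ 3 (mod 4) and q > 3, of characteristic p. Let a_1,...,a_{(q-1)/2} be all nonzero squares in F_q. Then det[(a_i + a_j)^{(q-3)/2}]_{1≤i,j≤(q-1)/2} = (-1)^{(q+5)/4} · binom((q-3)/2, (q-3)/4) · v² in F_q, where v = ∏_{s=0}^{(q-7)/4} binom((q-3)/2, s) reduced mod p. -/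
/-!
Expanding `(aᵢ + aⱼ)^(n-1)` binomially factors the matrix as `V * diag (C(n-1, k)) * W`, where `V`
is the Vandermonde matrix of the `aᵢ` and `W` is `Vᵀ` with its rows reversed; hence the
determinant is `∏ₖ C(n-1, k) * ∏_{i ≠ j} (aᵢ - aⱼ)`. The nonzero squares are exactly the roots of
`X^n - 1`, `n = (q-1)/2`, so the off-diagonal product is `∏ᵢ f'(aᵢ) = n^n`. As `2n = -1` in `F`,
`n^n` is the quadratic character of `-1/2`, i.e. `χ₄(q) χ₈(q) = (-1)^((q+5)/4)`, and the symmetry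
of the binomial coefficients turns `∏ₖ C(2m, k)` into `C(2m, m)` times a square.
-/

open Equiv Finset

theorem Fin.sign_revPerm : ∀ n : ℕ,
    Perm.sign (Fin.revPerm : Perm (Fin n)) = (-1) ^ n.choose 2
  | 0 => by simp [Subsingleton.elim (Fin.revPerm : Perm (Fin 0)) 1]
  | n + 1 => by
    have h : (Fin.revPerm : Perm (Fin (n + 1))) * finRotate (n + 1) =
        finSuccEquivLast.symm.permCongr (optionCongr Fin.revPerm) := by
      ext x
      refine Fin.lastCases ?_ (fun i => ?_) x
      · simp
      · simp [Fin.coeSucc_eq_succ, Fin.rev_succ]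
    have hs := congrArg Perm.sign h
    rw [map_mul, sign_finRotate, Perm.sign_permCongr, optionCongr_sign, Fin.sign_revPerm n,
      Nat.add_sub_cancel] at hs
    rw [eq_mul_inv_of_mul_eq hs, ← inv_pow, Int.units_inv_eq_self, ← pow_add,
      Nat.choose_succ_succ', Nat.choose_one_right, add_comm]

namespace Matrix

variable {R : Type*} [CommRing R]

theorem det_of_pow_sub_one_sub {n : ℕ} (v : Fin n → R) :
    (of fun k j : Fin n => v j ^ (n - 1 - k)).det = (-1) ^ n.choose 2 * (vandermonde v).det := by
  have h : (of fun k j : Fin n => v j ^ (n - 1 - k)) =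
      (vandermonde v)ᵀ.submatrix Fin.revPerm id := by
    ext k j
    simp only [of_apply, submatrix_apply, transpose_apply, vandermonde_apply, id_eq,
      Fin.revPerm_apply, Fin.val_rev]
    congr 1
    omega
  rw [h, det_permute, det_transpose, Fin.sign_revPerm]
  norm_cast

theorem neg_one_pow_choose_two_mul_det_vandermonde_sq {n : ℕ} (v : Fin n → R) :
    (-1) ^ n.choose 2 * (vandermonde v).det ^ 2 = ∏ i, ∏ j ∈ {i}ᶜ, (v i - v j) := by
  have hpairs : ∑ i : Fin n, #(Ioi i) = n.choose 2 := by
    simp_rw [Fin.card_Ioi]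
    rw [Fin.sum_univ_eq_sum_range (fun k => n - 1 - k), sum_range_reflect (fun k => k) n,
      sum_range_id, Nat.choose_two_right]
  rw [← prod_prod_Ioi_mul_eq_prod_prod_off_diag fun i j => v j - v i, det_vandermonde,
    ← hpairs, ← prod_pow_eq_pow_sum, sq, ← prod_mul_distrib, ← prod_mul_distrib]
  refine prod_congr rfl fun i _ => ?_
  rw [← prod_mul_distrib, ← prod_const, ← prod_mul_distrib]
  exact prod_congr rfl fun j _ => by ring

theorem det_of_add_pow_sub_one {n : ℕ} (v : Fin n → R) :
    (of fun i j : Fin n => (v i + v j) ^ (n - 1)).det =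
      (∏ k : Fin n, ((n - 1).choose k : R)) * ∏ i, ∏ j ∈ {i}ᶜ, (v i - v j) := by
  have h : (of fun i j : Fin n => (v i + v j) ^ (n - 1)) =
      vandermonde v * diagonal (fun k : Fin n => ((n - 1).choose k : R)) *
        of fun (k j : Fin n) => v j ^ (n - 1 - k) := by
    ext i j
    rcases n with _ | n
    · exact i.elim0
    rw [mul_apply, of_apply, add_pow, ← Fin.sum_univ_eq_sum_range]
    refine sum_congr rfl fun k _ => ?_
    simp only [mul_diagonal, vandermonde_apply, of_apply]
    ring
  rw [h, det_mul, det_mul, det_diagonal, det_of_pow_sub_one_sub,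
    ← neg_one_pow_choose_two_mul_det_vandermonde_sq]
  ring

end Matrix

namespace Lagrange

open Polynomial

variable {R : Type*} [CommRing R] [IsDomain R] {n : ℕ} {a : Fin n → R}

theorem nodal_univ_eq_X_pow_sub_one (hn : n ≠ 0) (ha : Function.Injective a)
    (hroot : ∀ i, a i ^ n = 1) : nodal univ a = X ^ n - 1 := by
  have hdeg : (X ^ n - 1 : R[X]).degree = n := by
    simpa using degree_X_pow_sub_C (Nat.pos_of_ne_zero hn) (1 : R)
  refine eq_of_degree_le_of_eval_index_eq (v := a) univ ha.injOn (by simp [degree_nodal])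
    (by simp [degree_nodal, hdeg]) ?_ fun i _ => ?_
  · rw [nodal_monic.leadingCoeff, ← C_1, (monic_X_pow_sub_C 1 hn).leadingCoeff]
  · simp [eval_nodal_at_node (mem_univ i), hroot i]

theorem prod_prod_sub_of_pow_eq_one (hn : Odd n) (ha : Function.Injective a)
    (hroot : ∀ i, a i ^ n = 1) : ∏ i, ∏ j ∈ {i}ᶜ, (a i - a j) = (n : R) ^ n := by
  have hnodal := nodal_univ_eq_X_pow_sub_one hn.pos.ne' ha hroot
  have hrow (i : Fin n) : ∏ j ∈ {i}ᶜ, (a i - a j) = n * a i ^ (n - 1) := by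
    rw [compl_singleton, ← eval_nodal, ← eval_nodal_derivative_eval_node_eq (mem_univ i), hnodal]
    simp [derivative_X_pow]
  have hprod : ∏ i, a i = 1 := by
    have h0 := congrArg (eval 0) hnodal
    simp only [eval_nodal, zero_sub, prod_neg, eval_sub, eval_pow, eval_X, eval_one,
      zero_pow hn.pos.ne', card_univ, Fintype.card_fin, hn.neg_one_pow] at h0
    simpa using h0
  rw [prod_congr rfl fun i _ => hrow i, prod_mul_distrib, prod_pow, hprod]
  simp

end Lagrange

namespace FiniteField

variable {F : Type*} [Field F] [Fintype F]

theorem natCast_card_div_two (hF : ringChar F ≠ 2) : ((Fintype.card F / 2 : ℕ) : F) = -2⁻¹ := by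
  have hodd := odd_card_of_char_ne_two hF
  have h2 : (2 : F) ≠ 0 := Ring.two_ne_zero hF
  have hcard : (Fintype.card F : F) = 0 := cast_card_eq_zero F
  rw [eq_neg_iff_add_eq_zero, ← mul_right_inj' h2, mul_add, mul_inv_cancel₀ h2, mul_zero]
  have h : ((2 * (Fintype.card F / 2) + 1 : ℕ) : F) = 0 := by
    rwa [show 2 * (Fintype.card F / 2) + 1 = Fintype.card F by omega]
  exact_mod_cast h

theorem neg_inv_two_pow_card_div_two [DecidableEq F] (hF : ringChar F ≠ 2) :
    (-2⁻¹ : F) ^ (Fintype.card F / 2) =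
      ((ZMod.χ₄ (Fintype.card F) * ZMod.χ₈ (Fintype.card F) : ℤ) : F) := by
  rw [← quadraticChar_eq_pow_of_char_ne_two' hF, neg_eq_neg_one_mul, map_mul,
    ← MulChar.inv_apply', (quadraticChar_isQuadratic F).inv, quadraticChar_neg_one hF,
    quadraticChar_two hF]

end FiniteField

theorem ZMod.χ₄_mul_χ₈_of_mod_four_eq_three {q : ℕ} (hq : q % 4 = 3) :
    ZMod.χ₄ q * ZMod.χ₈ q = (-1) ^ ((q + 5) / 4) := by
  rw [ZMod.χ₄_nat_three_mod_four hq, ZMod.χ₈_nat_eq_if_mod_eight]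
  have hodd : q % 2 = 1 := by omega
  rcases (by omega : q % 8 = 3 ∨ q % 8 = 7) with h | h
  · have : Even ((q + 5) / 4) := ⟨(q + 5) / 8, by omega⟩
    simp [hodd, h, this.neg_one_pow]
  · have : Odd ((q + 5) / 4) := ⟨(q + 1) / 8, by omega⟩
    simp [hodd, h, this.neg_one_pow]

theorem Finset.prod_range_two_mul_add_one_of_symm {M : Type*} [CommMonoid M] (f : ℕ → M) (m : ℕ)
    (hf : ∀ k < m, f (2 * m - k) = f k) :
    ∏ k ∈ range (2 * m + 1), f k = f m * (∏ k ∈ range m, f k) ^ 2 := by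
  have hupper : ∏ k ∈ range m, f (m + (k + 1)) = ∏ k ∈ range m, f k := by
    rw [← prod_range_reflect f m]
    refine prod_congr rfl fun k hk => ?_
    rw [← hf (m - 1 - k) (by grind), show 2 * m - (m - 1 - k) = m + (k + 1) by grind]
  rw [show 2 * m + 1 = m + (m + 1) by ring, prod_range_add, prod_range_succ', hupper, add_zero,
    sq]
  ac_rfl

theorem stmt_9 (F : Type*) [Field F] [Fintype F] (q : ℕ)
    (hq : Fintype.card F = q) (h4 : q % 4 = 3) (hq3 : 3 < q)
    (a : Fin ((q - 1) / 2) → F) (ha : Function.Injective a)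
    (hsq : ∀ x : F, (∃ i, a i = x) ↔ x ≠ 0 ∧ ∃ y : F, y ^ 2 = x) :
    Matrix.det (Matrix.of fun i j : Fin ((q - 1) / 2) => (a i + a j) ^ ((q - 3) / 2))
      = (-1) ^ ((q + 5) / 4) * (Nat.choose ((q - 3) / 2) ((q - 3) / 4) : F) *
        (∏ s ∈ Finset.range ((q - 7) / 4 + 1), (Nat.choose ((q - 3) / 2) s : F)) ^ 2 := by
  classical
  have hF : ringChar F ≠ 2 := fun h => by
    have := FiniteField.even_card_of_char_two h
    omega
  have hroot (i) : a i ^ ((q - 1) / 2) = 1 := by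
    obtain ⟨hi, y, hy⟩ := (hsq (a i)).1 ⟨i, rfl⟩
    rw [← hy, ← pow_mul, show 2 * ((q - 1) / 2) = q - 1 by omega, ← hq]
    exact FiniteField.pow_card_sub_one_eq_one y (by rintro rfl; simp [← hy] at hi)
  have hsign : (((q - 1) / 2 : ℕ) : F) ^ ((q - 1) / 2) = (-1) ^ ((q + 5) / 4) := by
    rw [show (q - 1) / 2 = Fintype.card F / 2 by omega, FiniteField.natCast_card_div_two hF,
      FiniteField.neg_inv_two_pow_card_div_two hF, hq, ZMod.χ₄_mul_χ₈_of_mod_four_eq_three h4]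
    norm_cast
  rw [show (q - 3) / 2 = (q - 1) / 2 - 1 by omega, Matrix.det_of_add_pow_sub_one,
    Lagrange.prod_prod_sub_of_pow_eq_one ⟨(q - 3) / 4, by omega⟩ ha hroot, hsign,
    Fin.prod_univ_eq_prod_range (fun k => (((q - 1) / 2 - 1).choose k : F)),
    show (q - 1) / 2 = 2 * ((q - 3) / 4) + 1 by omega,
    show (q - 7) / 4 + 1 = (q - 3) / 4 by omega, Nat.add_sub_cancel,
    prod_range_two_mul_add_one_of_symm]
  · ring
  · exact fun k hk => by rw [Nat.choose_symm (by omega)]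
end

section
/- Let p ≡ 1 (mod 4) be a prime and let a_1,...,a_{(p-1)/2} be all the quadratic residues modulo p in {1,...,p-1}. Then the determinant of the matrix [(a_i + a_j)^{(p-3)/2}]_{1≤i,j≤(p-1)/2} over F_p is a nonzero square in F_p. -/
/-!
Expanding `(a i + a j) ^ m` binomially factors the matrix as `V * diagonal (m.choose ·) * W`,
where `V` is the Vandermonde matrix of `a` and `W` is `Vᵀ` with its rows reversed, so the
determinant is `± (∏ k, m.choose k) * (det V) ^ 2`. Since
`(∏ k, m.choose k) * (∏ k, k !) ^ 2 = m ! ^ (m + 1)` and `m + 1 = (p - 1) / 2`, Euler's criterion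
makes the binomial product `±1` times a nonzero square; for `p ≡ 1 (mod 4)` the sign `-1` is
itself a square.
-/

open Matrix Finset Function Nat

theorem det_of_add_pow_s10 {R : Type*} [CommRing R] (m : ℕ) (a b : Fin (m + 1) → R) :
    det (of fun i j => (a i + b j) ^ m) =
      det (vandermonde a) * (∏ k ∈ range (m + 1), (m.choose k : R)) *
        ((Equiv.Perm.sign (Fin.revPerm : Equiv.Perm (Fin (m + 1))) : ℤ) : R) *
        det (vandermonde b) := by
  have hfactor : of (fun i j => (a i + b j) ^ m) =
      vandermonde a * diagonal (fun k : Fin (m + 1) => (m.choose k : R)) *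
        (vandermonde b)ᵀ.submatrix Fin.revPerm id := by
    ext i j
    rw [mul_apply]
    simp only [of_apply, mul_diagonal, vandermonde_apply, submatrix_apply,
      transpose_apply, id, Fin.revPerm_apply, Fin.val_rev, add_pow,
      ← Fin.sum_univ_eq_sum_range (fun k => a i ^ k * b j ^ (m - k) * (m.choose k : R))]
    refine sum_congr rfl fun k _ => ?_
    rw [show m + 1 - (k + 1) = m - k by omega]
    ring
  rw [hfactor, det_mul, det_mul, det_diagonal, det_permute, det_transpose,
    Fin.prod_univ_eq_prod_range (fun k => (m.choose k : R))]
  ring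

theorem Nat.prod_choose_mul_sq_prod_factorial (m : ℕ) :
    (∏ k ∈ range (m + 1), m.choose k) * (∏ k ∈ range (m + 1), k !) ^ 2 = m ! ^ (m + 1) := by
  have hreflect : ∏ k ∈ range (m + 1), (m - k)! = ∏ k ∈ range (m + 1), k ! := by
    simpa using prod_range_reflect (fun k => k !) (m + 1)
  rw [sq]
  nth_rewrite 2 [← hreflect]
  rw [← mul_assoc, ← prod_mul_distrib, ← prod_mul_distrib,
    prod_congr rfl fun k hk => choose_mul_factorial_mul_factorial (by simp at hk; omega),
    prod_const, card_range]

theorem isSquare_of_eq_one_or_eq_neg_one {R : Type*} [Monoid R] [HasDistribNeg R]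
    (hneg : IsSquare (-1 : R)) {x : R} (hx : x = 1 ∨ x = -1) : IsSquare x := by
  rcases hx with rfl | rfl
  exacts [IsSquare.one, hneg]

namespace ZMod

variable {p : ℕ} [Fact p.Prime]

theorem prod_choose_ne_zero_and_isSquare (hp : p % 4 = 1) {m : ℕ} (hm : 2 * (m + 1) = p - 1) :
    (∏ k ∈ range (m + 1), (m.choose k : ZMod p)) ≠ 0 ∧
      IsSquare (∏ k ∈ range (m + 1), (m.choose k : ZMod p)) := by
  have hfact_ne : ∀ k ≤ m, (k ! : ZMod p) ≠ 0 := fun k hk => by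
    rw [Ne, natCast_eq_zero_iff, (Fact.out : p.Prime).dvd_factorial]
    omega
  have hpow_ne : (m ! : ZMod p) ^ (m + 1) ≠ 0 := pow_ne_zero _ (hfact_ne m le_rfl)
  have hpow_sq : IsSquare ((m ! : ZMod p) ^ (m + 1)) := by
    rw [show m + 1 = p / 2 by omega]
    exact isSquare_of_eq_one_or_eq_neg_one (exists_sq_eq_neg_one_iff.mpr (by omega))
      (pow_div_two_eq_neg_one_or_one p (hfact_ne m le_rfl))
  have hprod_ne : (∏ k ∈ range (m + 1), (k ! : ZMod p)) ≠ 0 :=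
    prod_ne_zero_iff.mpr fun k hk => hfact_ne k (by simp at hk; omega)
  have hid : (∏ k ∈ range (m + 1), (m.choose k : ZMod p)) *
      (∏ k ∈ range (m + 1), (k ! : ZMod p)) ^ 2 = (m ! : ZMod p) ^ (m + 1) := by
    exact_mod_cast congrArg (Nat.cast : ℕ → ZMod p) (Nat.prod_choose_mul_sq_prod_factorial m)
  refine ⟨left_ne_zero_of_mul (hid ▸ hpow_ne), ?_⟩
  rw [eq_div_of_mul_eq (pow_ne_zero 2 hprod_ne) hid]
  exact hpow_sq.div (IsSquare.sq _)

theorem det_of_add_pow_ne_zero_and_isSquare (hp : p % 4 = 1) {m : ℕ}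
    (hm : 2 * (m + 1) = p - 1) {a : Fin (m + 1) → ZMod p} (ha : Injective a) :
    det (of fun i j => (a i + a j) ^ m) ≠ 0 ∧ IsSquare (det (of fun i j => (a i + a j) ^ m)) := by
  obtain ⟨hP_ne, hP_sq⟩ := prod_choose_ne_zero_and_isSquare hp hm
  have hV_ne : det (vandermonde a) ≠ 0 := det_vandermonde_ne_zero_iff.mpr ha
  set ε : ZMod p := ((Equiv.Perm.sign (Fin.revPerm : Equiv.Perm (Fin (m + 1))) : ℤ) : ZMod p)
  have hε : ε = 1 ∨ ε = -1 := by
    rcases Int.units_eq_one_or (Equiv.Perm.sign (Fin.revPerm : Equiv.Perm (Fin (m + 1)))) with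
      h | h <;> simp [ε, h]
  have hε_ne : ε ≠ 0 := by rcases hε with h | h <;> simp [h]
  have hε_sq : IsSquare ε :=
    isSquare_of_eq_one_or_eq_neg_one (exists_sq_eq_neg_one_iff.mpr (by omega)) hε
  rw [det_of_add_pow_s10, show ∀ V P : ZMod p, V * P * ε * V = P * ε * V ^ 2 by intros; ring]
  exact ⟨by simp [hP_ne, hε_ne, hV_ne], (hP_sq.mul hε_sq).mul (IsSquare.sq _)⟩

end ZMod

theorem stmt_10_general (p : ℕ) [Fact p.Prime] (h4 : p % 4 = 1)
    (a : Fin ((p - 1) / 2) → ZMod p) (ha : Function.Injective a) :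
    Matrix.det (Matrix.of fun i j : Fin ((p - 1) / 2) => (a i + a j) ^ ((p - 3) / 2)) ≠ 0 ∧
    IsSquare (Matrix.det (Matrix.of fun i j : Fin ((p - 1) / 2) =>
      (a i + a j) ^ ((p - 3) / 2))) := by
  have hp5 : 5 ≤ p := by have := (Fact.out : p.Prime).two_le; omega
  obtain ⟨m, hm⟩ : ∃ m, (p - 1) / 2 = m + 1 := ⟨(p - 3) / 2, by omega⟩
  rw [show (p - 3) / 2 = m by omega]
  revert a
  rw [hm]
  exact fun a ha => ZMod.det_of_add_pow_ne_zero_and_isSquare h4 (by omega) ha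

theorem stmt_10 (p : ℕ) [Fact p.Prime] (h4 : p % 4 = 1)
    (a : Fin ((p - 1) / 2) → ZMod p) (ha : Function.Injective a)
    (hsq : ∀ x : ZMod p, (∃ i, a i = x) ↔ x ≠ 0 ∧ ∃ y : ZMod p, y ^ 2 = x) :
    Matrix.det (Matrix.of fun i j : Fin ((p - 1) / 2) => (a i + a j) ^ ((p - 3) / 2)) ≠ 0 ∧
    IsSquare (Matrix.det (Matrix.of fun i j : Fin ((p - 1) / 2) =>
      (a i + a j) ^ ((p - 3) / 2))) :=
  stmt_10_general p h4 a ha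
end

section
/- Let F_q be a finite field of odd characteristic p, let k be an odd integer with 1 < k ≤ q-1 and k | q-1, and let a_1,...,a_k be the k-th roots of unity in F_q. Suppose D_k = [(a_i + a_j)^{(q-3)/2}]_{1≤i,j≤k} is non-singular. Then det D_k, which lies in F_p, satisfies: det D_k is a square in F_p if and only if s_k is a nonzero square in F_p, where s_k = k · ∑_{r=1}^{(q-1)/(2k)} binom((q-3)/2, ((2r-1)k - 1)/2) taken mod p. -/
/-!
Put `n = (q - 3) / 2`, so that `k ∣ n + 1`. Since `a_i ^ k = 1`, grouping the binomial expansion of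
`(a_i + a_j) ^ n` by the residue mod `k` of the exponent of `a_i` factors the matrix as
`V * diag(c_0, …, c_{k-1}) * Wᵀ` with `V = (a_i ^ t)`, `W = (a_j ^ (k - 1 - t))` and
`c_t = ∑_{m ≡ t (mod k)} C(n, m)`. Orthogonality of the roots of unity gives
`V * Wᵀ = diag(k * a_i ^ (k - 1))`, and `∏ a_i = 1` for odd `k`, so `det D = k ^ k * ∏ c_t ∈ 𝔽_p`.
As `n ≡ -1 (mod k)`, the symmetry `C(n, m) = C(n, n - m)` gives `c_{k-1-t} = c_t`, hence
`det D = k * c_{(k-1)/2} * (k ^ ((k-1)/2) * ∏_{t < (k-1)/2} c_t) ^ 2`, and `k * c_{(k-1)/2} = s_k`.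
-/

open Finset Polynomial

/-- `∑_{m ≤ n, m ≡ t (mod k)} C(n, m)`, provided `k ∣ n + 1` and `t < k`. -/
def residueChooseSum (n k t : ℕ) : ℕ :=
  ∑ r ∈ range ((n + 1) / k), n.choose (k * r + t)

lemma pow_mul_add_of_pow_eq_one {M : Type*} [Monoid M] {x : M} {k : ℕ} (hx : x ^ k = 1)
    (r t : ℕ) : x ^ (k * r + t) = x ^ t := by
  rw [pow_add, pow_mul, hx, one_pow, one_mul]

lemma Nat.mul_add_lt_mul {k M r s : ℕ} (hr : r < M) (hs : s < k) : k * r + s < k * M :=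
  calc k * r + s < k * (r + 1) := by rw [mul_add_one]; omega
    _ ≤ k * M := Nat.mul_le_mul_left k hr

lemma Nat.sub_mul_add_eq {n k M r s : ℕ} (hn : n + 1 = k * M) (hr : r < M) (hs : s < k) :
    n - (k * r + s) = k * (M - 1 - r) + (k - 1 - s) := by
  obtain ⟨d, rfl⟩ := Nat.exists_eq_add_of_lt hr
  have : k * (r + d + 1) = k * r + k * d + k := by ring
  simp only [show r + d + 1 - 1 - r = d by omega]
  omega

lemma Finset.sum_range_mul_eq_sum_sum {M : Type*} [AddCommMonoid M] (f : ℕ → M) (k m : ℕ) :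
    ∑ i ∈ range (k * m), f i = ∑ r ∈ range m, ∑ t ∈ range k, f (k * r + t) := by
  induction m with
  | zero => simp
  | succ m ih => rw [mul_add_one, sum_range_add, ih, sum_range_succ]

theorem residueChooseSum_rev {n k t : ℕ} (hkn : k ∣ n + 1) (ht : t < k) :
    residueChooseSum n k (k - 1 - t) = residueChooseSum n k t := by
  obtain ⟨M, hM⟩ := hkn
  have hMk : (n + 1) / k = M := by rw [hM, Nat.mul_div_cancel_left _ (by omega)]
  unfold residueChooseSum
  rw [hMk, ← sum_range_reflect]
  refine sum_congr rfl fun r hr => ?_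
  have hr := mem_range.1 hr
  have := Nat.mul_add_lt_mul hr ht
  rw [← Nat.choose_symm (n := n) (k := k * r + t) (by omega), Nat.sub_mul_add_eq hM hr ht]

theorem sum_Icc_choose_eq_residueChooseSum {n k : ℕ} (hk : Odd k) :
    ∑ r ∈ Icc 1 ((n + 1) / k), n.choose (((2 * r - 1) * k - 1) / 2) =
      residueChooseSum n k ((k - 1) / 2) := by
  obtain ⟨h, rfl⟩ := hk
  rw [← Ico_add_one_right_eq_Icc, sum_Ico_eq_sum_range, add_tsub_cancel_right, residueChooseSum]
  refine sum_congr rfl fun r _ => ?_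
  have : (2 * (1 + r) - 1) * (2 * h + 1) - 1 = 2 * ((2 * h + 1) * r + h) := by
    rw [show 2 * (1 + r) - 1 = 2 * r + 1 by omega]
    rw [show (2 * r + 1) * (2 * h + 1) = 2 * ((2 * h + 1) * r + h) + 1 by ring]
    rfl
  rw [this, Nat.mul_div_cancel_left _ two_pos]
  congr 2
  omega

theorem add_pow_eq_sum_residueChooseSum {R : Type*} [CommSemiring R] {x y : R} {n k : ℕ}
    (hx : x ^ k = 1) (hy : y ^ k = 1) (hkn : k ∣ n + 1) :
    (x + y) ^ n = ∑ t ∈ range k, x ^ t * residueChooseSum n k t * y ^ (k - 1 - t) := by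
  obtain ⟨M, hM⟩ := hkn
  have hMk : (n + 1) / k = M := by
    rcases k.eq_zero_or_pos with rfl | hk
    · omega
    · rw [hM, Nat.mul_div_cancel_left _ hk]
  rw [add_pow, hM, sum_range_mul_eq_sum_sum, sum_comm]
  refine sum_congr rfl fun t ht => ?_
  rw [residueChooseSum, hMk, Nat.cast_sum, mul_sum, sum_mul]
  refine sum_congr rfl fun r hr => ?_
  rw [Nat.sub_mul_add_eq hM (mem_range.1 hr) (mem_range.1 ht), pow_mul_add_of_pow_eq_one hx,
    pow_mul_add_of_pow_eq_one hy]
  ring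

lemma prod_range_odd_of_symm {M : Type*} [CommMonoid M] {k : ℕ} (hk : Odd k) {f : ℕ → M}
    (hf : ∀ t < k, f (k - 1 - t) = f t) :
    ∏ t ∈ range k, f t = f ((k - 1) / 2) * (∏ t ∈ range ((k - 1) / 2), f t) ^ 2 := by
  obtain ⟨h, rfl⟩ := hk
  have hh : (2 * h + 1 - 1) / 2 = h := by omega
  rw [hh, show 2 * h + 1 = h + (1 + h) by ring, prod_range_add, prod_range_add, prod_range_one,
    ← prod_range_reflect (fun t => f (h + (1 + t)))]
  have : ∀ t ∈ range h, f (h + (1 + (h - 1 - t))) = f t := fun t ht => by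
    have := mem_range.1 ht
    rw [← hf t (by omega)]
    congr 1
    omega
  rw [prod_congr rfl this, sq]
  exact mul_left_comm _ _ _

lemma Fin.val_rev_eq_sub_one_sub {k : ℕ} (t : Fin k) : (t.rev : ℕ) = k - 1 - t := by
  rw [Fin.val_rev]; omega

theorem pow_mul_prod_residueChooseSum {n k : ℕ} (hk : Odd k) (hkn : k ∣ n + 1) :
    k ^ k * ∏ t ∈ range k, residueChooseSum n k t =
      k * residueChooseSum n k ((k - 1) / 2) *
        (k ^ ((k - 1) / 2) * ∏ t ∈ range ((k - 1) / 2), residueChooseSum n k t) ^ 2 := by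
  rw [prod_range_odd_of_symm hk fun t ht => residueChooseSum_rev hkn ht,
    show k ^ k = k * (k ^ ((k - 1) / 2)) ^ 2 by
      rw [← pow_mul, ← pow_succ']; congr 1; obtain ⟨h, rfl⟩ := hk; omega]
  ring

section RootsOfUnity

open Matrix

variable {R : Type*} [CommRing R] [IsDomain R] {k : ℕ} {a : Fin k → R}

theorem nodal_eq_X_pow_sub_one (hk : 0 < k) (ha : Function.Injective a)
    (hroot : ∀ i, a i ^ k = 1) : Lagrange.nodal univ a = X ^ k - 1 := by
  have hdeg : degree (1 : R[X]) < degree ((X : R[X]) ^ k) := by simp [hk]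
  have hXk : (X ^ k - 1 : R[X]).degree = k := by
    rw [degree_sub_eq_left_of_degree_lt hdeg, degree_X_pow]
  refine (eq_of_degree_le_of_eval_index_eq univ ha.injOn ?_ ?_ ?_ fun i _ => ?_).symm
  · simp [hXk]
  · simp [hXk, Lagrange.degree_nodal]
  · rw [Lagrange.nodal_monic.leadingCoeff, leadingCoeff_sub_of_degree_lt hdeg, monic_X_pow]
  · simp [Lagrange.eval_nodal_at_node (mem_univ i), hroot i]

theorem prod_eq_one_of_odd (hk : Odd k) (ha : Function.Injective a) (hroot : ∀ i, a i ^ k = 1) :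
    ∏ i, a i = 1 := by
  have h := congrArg (eval 0) (nodal_eq_X_pow_sub_one hk.pos ha hroot)
  simp only [Lagrange.eval_nodal, zero_sub, prod_neg, eval_sub, eval_pow, eval_X, eval_one,
    zero_pow hk.pos.ne', card_univ, Fintype.card_fin, hk.neg_one_pow] at h
  simpa using h

theorem vandermonde_mul_transpose_rev (ha : Function.Injective a) (hroot : ∀ i, a i ^ k = 1) :
    vandermonde a * ((vandermonde a).submatrix id Fin.rev)ᵀ =
      diagonal fun i => (k : R) * a i ^ (k - 1) := by
  ext i j
  simp only [mul_apply, transpose_apply, submatrix_apply, id, vandermonde_apply,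
    Fin.val_rev_eq_sub_one_sub]
  rw [Fin.sum_univ_eq_sum_range (fun t => a i ^ t * a j ^ (k - 1 - t))]
  rcases eq_or_ne i j with rfl | hij
  · rw [diagonal_apply_eq, sum_congr rfl fun t ht => (pow_add _ _ _).symm.trans
      (congrArg _ (show t + (k - 1 - t) = k - 1 by have := mem_range.1 ht; omega))]
    simp
  · rw [diagonal_apply_ne _ hij]
    have h := geom_sum₂_mul (a i) (a j) k
    rw [hroot, hroot, sub_self] at h
    exact (mul_eq_zero.1 h).resolve_right (sub_ne_zero.2 (ha.ne hij))

theorem det_add_pow_eq_residueChooseSum {n : ℕ} (hk : Odd k) (ha : Function.Injective a)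
    (hroot : ∀ i, a i ^ k = 1) (hkn : k ∣ n + 1) :
    (of fun i j => (a i + a j) ^ n).det =
      ((k ^ k * ∏ t ∈ range k, residueChooseSum n k t : ℕ) : R) := by
  have hfact : of (fun i j => (a i + a j) ^ n) = vandermonde a *
      diagonal (fun t : Fin k => (residueChooseSum n k t : R)) *
      ((vandermonde a).submatrix id Fin.rev)ᵀ := by
    ext i j
    rw [of_apply, add_pow_eq_sum_residueChooseSum (hroot i) (hroot j) hkn, mul_apply,
      ← Fin.sum_univ_eq_sum_range (fun t => a i ^ t * residueChooseSum n k t * a j ^ (k - 1 - t))]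
    simp only [mul_diagonal, transpose_apply, submatrix_apply, id, vandermonde_apply,
      Fin.val_rev_eq_sub_one_sub]
  rw [hfact, det_mul, det_mul, mul_right_comm, ← det_mul, vandermonde_mul_transpose_rev ha hroot,
    det_diagonal, det_diagonal, prod_mul_distrib, prod_const, prod_pow,
    prod_eq_one_of_odd hk ha hroot, one_pow, mul_one, card_univ, Fintype.card_fin,
    Fin.prod_univ_eq_prod_range (fun t => (residueChooseSum n k t : R))]
  push_cast
  rfl

end RootsOfUnity

lemma isSquare_iff_of_eq_mul_sq {K : Type*} [Field K] {d s e : K} (hd : d = s * e ^ 2)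
    (hd0 : d ≠ 0) : IsSquare d ↔ s ≠ 0 ∧ IsSquare s := by
  have he : e ≠ 0 := by rintro rfl; simp_all
  refine ⟨fun hsq => ⟨by rintro rfl; simp_all, ?_⟩, fun ⟨_, hs⟩ => hd ▸ hs.mul (.sq e)⟩
  rw [show s = d * (e⁻¹) ^ 2 by rw [hd]; field_simp]
  exact hsq.mul (.sq _)

theorem stmt_14_general (F : Type*) [Field F] [Fintype F] (q p k : ℕ)
    (hq : Fintype.card F = q) [Fact p.Prime] [CharP F p] (hp2 : p ≠ 2)
    (hkodd : Odd k) (hdvd : k ∣ q - 1)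
    (a : Fin k → F) (ha : Function.Injective a) (hroot : ∀ i, a i ^ k = 1)
    (hns : Matrix.det (Matrix.of fun i j : Fin k => (a i + a j) ^ ((q - 3) / 2)) ≠ 0) :
    ∃ d : ZMod p,
      ZMod.castHom (dvd_refl p) F d
        = Matrix.det (Matrix.of fun i j : Fin k => (a i + a j) ^ ((q - 3) / 2)) ∧
      (IsSquare d ↔
        ((k : ZMod p) * ∑ r ∈ Finset.Icc 1 ((q - 1) / (2 * k)),
            (Nat.choose ((q - 3) / 2) (((2 * r - 1) * k - 1) / 2) : ZMod p)) ≠ 0 ∧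
        IsSquare ((k : ZMod p) * ∑ r ∈ Finset.Icc 1 ((q - 1) / (2 * k)),
            (Nat.choose ((q - 3) / 2) (((2 * r - 1) * k - 1) / 2) : ZMod p))) := by
  obtain ⟨m, -, hqm⟩ := FiniteField.card F p
  have hqodd : Odd q := hq ▸ hqm ▸ ((Fact.out : p.Prime).odd_of_ne_two hp2).pow
  have hq1 : 1 < q := hq ▸ Fintype.one_lt_card
  set n := (q - 3) / 2
  have hqn : q - 1 = 2 * (n + 1) := by obtain ⟨j, rfl⟩ := hqodd; omega
  have hkn : k ∣ n + 1 := (Nat.coprime_two_right.2 hkodd).dvd_of_dvd_mul_left (hqn ▸ hdvd)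
  have hdet := det_add_pow_eq_residueChooseSum hkodd ha hroot hkn
  have hsum := sum_Icc_choose_eq_residueChooseSum (n := n) hkodd
  have hsplit := pow_mul_prod_residueChooseSum hkodd hkn
  set c := residueChooseSum n k
  set h := (k - 1) / 2
  have hs : (k : ZMod p) * ∑ r ∈ Icc 1 ((q - 1) / (2 * k)),
      (n.choose (((2 * r - 1) * k - 1) / 2) : ZMod p) = ((k * c h : ℕ) : ZMod p) := by
    rw [hqn, Nat.mul_div_mul_left _ _ two_pos, ← hsum]
    push_cast
    rfl
  refine ⟨((k ^ k * ∏ t ∈ range k, c t : ℕ) : ZMod p), by rw [map_natCast, hdet], ?_⟩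
  rw [hs]
  refine isSquare_iff_of_eq_mul_sq (e := ((k ^ h * ∏ t ∈ range h, c t : ℕ) : ZMod p))
    (by rw [hsplit]; push_cast; ring) fun h0 => hns ?_
  rw [hdet, ← map_natCast (ZMod.castHom (dvd_refl p) F), h0, map_zero]

theorem stmt_14 (F : Type*) [Field F] [Fintype F] (q p k : ℕ)
    (hq : Fintype.card F = q) [Fact p.Prime] [CharP F p] (hp2 : p ≠ 2)
    (hkodd : Odd k) (hk1 : 1 < k) (hk2 : k ≤ q - 1) (hdvd : k ∣ q - 1)
    (a : Fin k → F) (ha : Function.Injective a) (hroot : ∀ i, a i ^ k = 1)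
    (hns : Matrix.det (Matrix.of fun i j : Fin k => (a i + a j) ^ ((q - 3) / 2)) ≠ 0) :
    ∃ d : ZMod p,
      ZMod.castHom (dvd_refl p) F d
        = Matrix.det (Matrix.of fun i j : Fin k => (a i + a j) ^ ((q - 3) / 2)) ∧
      (IsSquare d ↔
        ((k : ZMod p) * ∑ r ∈ Finset.Icc 1 ((q - 1) / (2 * k)),
            (Nat.choose ((q - 3) / 2) (((2 * r - 1) * k - 1) / 2) : ZMod p)) ≠ 0 ∧
        IsSquare ((k : ZMod p) * ∑ r ∈ Finset.Icc 1 ((q - 1) / (2 * k)),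
            (Nat.choose ((q - 3) / 2) (((2 * r - 1) * k - 1) / 2) : ZMod p))) :=
  stmt_14_general F q p k hq hp2 hkodd hdvd a ha hroot hns
end

section
/- Let F_q be a finite field of odd characteristic p and let a_1,...,a_{q-1} be all nonzero elements of F_q. Then the matrix T_{q-1} = [(a_i² + a_i a_j + a_j²)^{(q-3)/2}]_{1≤i,j≤q-1} is singular over F_q. -/
theorem stmt_16 (F : Type*) [Field F] [Fintype F] (q : ℕ)
    (hq : Fintype.card F = q) (hodd : Odd q)
    (a : Fin (q - 1) → F) (ha : Function.Injective a)
    (hne : ∀ i, a i ≠ 0) (hsurj : ∀ x : F, x ≠ 0 → ∃ i, a i = x) :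
    Matrix.det (Matrix.of fun i j : Fin (q - 1) =>
      (a i ^ 2 + a i * a j + a j ^ 2) ^ ((q - 3) / 2)) = 0 := by
  have hq2 : 2 ≤ q := hq ▸ Fintype.one_lt_card
  have hq3 : 3 ≤ q := by obtain ⟨k, hk⟩ := hodd; omega
  set m := (q - 3) / 2 with hm
  have h2m : 2 * m = q - 3 := by obtain ⟨k, hk⟩ := hodd; omega
  have h2mlt : 2 * m < q - 1 := by omega
  set p : Polynomial F := (Polynomial.X ^ 2 + Polynomial.X + 1) ^ m with hp
  have hdeg : p.natDegree < 2 * m + 1 := by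
    have h1 : (Polynomial.X ^ 2 + Polynomial.X + 1 : Polynomial F).natDegree ≤ 2 := by
      compute_degree
    calc p.natDegree ≤ m * 2 := le_trans (Polynomial.natDegree_pow_le)
          (Nat.mul_le_mul_left m h1)
      _ < 2 * m + 1 := by omega
  set P : Matrix (Fin (q - 1)) (Fin (q - 1)) F := Matrix.of fun i k => a i ^ (k : ℕ) with hP
  set Q : Matrix (Fin (q - 1)) (Fin (q - 1)) F := Matrix.of fun k j =>
    if (k : ℕ) ≤ 2 * m then p.coeff k * a j ^ (2 * m - (k : ℕ)) else 0 with hQ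
  have key : (Matrix.of fun i j : Fin (q - 1) =>
      (a i ^ 2 + a i * a j + a j ^ 2) ^ ((q - 3) / 2)) = P * Q := by
    ext i j
    have hy : a j ≠ 0 := hne j
    rw [Matrix.mul_apply]
    have hsum : ∑ k : Fin (q - 1), P i k * Q k j
        = ∑ k ∈ Finset.range (2 * m + 1), p.coeff k * (a i ^ k * a j ^ (2 * m - k)) := by
      have e1 : ∑ k : Fin (q - 1), P i k * Q k j
          = ∑ k ∈ Finset.range (q - 1),
            a i ^ k * (if k ≤ 2 * m then p.coeff k * a j ^ (2 * m - k) else 0) :=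
        Fin.sum_univ_eq_sum_range
          (fun k => a i ^ k * (if k ≤ 2 * m then p.coeff k * a j ^ (2 * m - k) else 0)) _
      rw [e1]
      rw [← Finset.sum_subset (Finset.range_subset_range.2 (by omega : 2 * m + 1 ≤ q - 1))
        (fun k _ hk2 => by
          rw [Finset.mem_range, not_lt] at hk2
          rw [if_neg (by omega), mul_zero])]
      apply Finset.sum_congr rfl
      intro k hk
      rw [Finset.mem_range] at hk
      rw [if_pos (by omega)]
      ring
    rw [hsum]
    have heval : (a i ^ 2 + a i * a j + a j ^ 2) ^ m
        = a j ^ (2 * m) * p.eval (a i / a j) := by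
      rw [hp, Polynomial.eval_pow, pow_mul, ← mul_pow]
      congr 1
      simp only [Polynomial.eval_add, Polynomial.eval_pow, Polynomial.eval_X,
        Polynomial.eval_one]
      field_simp
    rw [Matrix.of_apply, ← hm, heval]
    rw [Polynomial.eval_eq_sum_range' hdeg, Finset.mul_sum]
    apply Finset.sum_congr rfl
    intro k hk
    rw [Finset.mem_range] at hk
    have hk' : k ≤ 2 * m := by omega
    have hpow : a j ^ (2 * m) = a j ^ (2 * m - k) * a j ^ k := by
      rw [← pow_add]; congr 1; omega
    rw [hpow, div_pow]
    field_simp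
  rw [key, Matrix.det_mul]
  have hQ0 : Q.det = 0 := by
    apply Matrix.det_eq_zero_of_row_eq_zero ⟨q - 2, by omega⟩
    intro j
    rw [hQ, Matrix.of_apply, if_neg]
    simp only
    omega
  rw [hQ0, mul_zero]
end

section
/- Let g be a generator of F_q^× where q is an odd prime power, let k be odd with k | q-1 and 1 < k ≤ q-1, and write q - 1 = 2mk. For 0 ≤ i ≤ k-1 define b_i = (1 + g^{2mi})^{(q-3)/2} · g^{mi} · (-1)^i ∈ F_q. Then b_i = b_{k-i} for all 1 ≤ i ≤ k-1. -/
/-!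
Put `c = g^(m i)` and `d = g^(m (k - i))`. As `g` has order `q - 1 = 2mk`, `g^(mk) = -1`, so
`c d = -1`. Hence `1 + d² = d² (1 + c²)` and `d^(q - 2) = -c`, which turns `b (k - i)` into `b i`
once the sign `(-1)^(k - i) = -(-1)^i` (for odd `k`) is accounted for.
-/

lemma ne_zero_of_forall_pow_eq {F : Type*} [Field F] [Fintype F] (hF : 2 < Fintype.card F)
    {g : F} (hg : ∀ x : F, x ≠ 0 → ∃ n : ℕ, g ^ n = x) : g ≠ 0 := by
  classical
  rintro rfl
  have h_eq_one : ∀ x : F, x ≠ 0 → x = 1 := fun x hx => by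
    obtain ⟨_ | n, rfl⟩ := hg x hx
    · exact pow_zero 0
    · exact absurd (zero_pow n.succ_ne_zero) hx
  have : Fintype.card Fˣ ≤ 1 := Fintype.card_le_one_iff.mpr fun u v =>
    Units.ext <| by rw [h_eq_one u u.ne_zero, h_eq_one v v.ne_zero]
  rw [Fintype.card_units] at this
  omega

lemma isPrimitiveRoot_of_forall_pow_eq {F : Type*} [Field F] [Fintype F] {g : F} (hg0 : g ≠ 0)
    (hg : ∀ x : F, x ≠ 0 → ∃ n : ℕ, g ^ n = x) : IsPrimitiveRoot g (Fintype.card F - 1) := by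
  classical
  set u := Units.mk0 g hg0
  have hu : ∀ x : Fˣ, x ∈ Submonoid.powers u := fun x => by
    obtain ⟨n, hn⟩ := hg x x.ne_zero
    exact ⟨n, Units.ext (by simpa [u] using hn)⟩
  rw [← Fintype.card_units, ← Nat.card_eq_fintype_card, ← orderOf_eq_card_of_forall_mem_powers hu]
  exact IsPrimitiveRoot.coe_units_iff.mpr (IsPrimitiveRoot.orderOf u)

lemma IsPrimitiveRoot.pow_eq_neg_one {R : Type*} [CommRing R] [NoZeroDivisors R] {ζ : R}
    {N : ℕ} (h : IsPrimitiveRoot ζ (2 * N)) (hN : N ≠ 0) : ζ ^ N = -1 := by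
  refine IsPrimitiveRoot.eq_neg_one_of_two_right ?_
  simpa [hN] using h.pow_of_dvd hN (dvd_mul_left N 2)

lemma neg_one_pow_sub_of_odd {R : Type*} [CommRing R] {k i : ℕ} (hk : Odd k) (hi : i ≤ k) :
    (-1 : R) ^ (k - i) = -(-1) ^ i := by
  have hsum : (-1 : R) ^ (k - i) * (-1) ^ i = -1 := by
    rw [← pow_add, Nat.sub_add_cancel hi, hk.neg_one_pow]
  have hsq : ((-1 : R) ^ i) ^ 2 = 1 := by rw [← pow_mul, mul_comm, pow_mul]; simp
  linear_combination (-1 : R) ^ i * hsum - (-1 : R) ^ (k - i) * hsq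

lemma one_add_sq_pow_mul_eq_neg {R : Type*} [CommRing R] {c d : R} (n : ℕ) (hcd : c * d = -1)
    (hd : d ^ (2 * n + 2) = 1) : (1 + d ^ 2) ^ n * d = -((1 + c ^ 2) ^ n * c) := by
  have hpow : d ^ (2 * n + 1) = -c := by
    linear_combination (-c) * hd + d ^ (2 * n + 1) * hcd
  have hsq : 1 + d ^ 2 = d ^ 2 * (1 + c ^ 2) := by linear_combination (1 - c * d) * hcd
  rw [hsq, mul_pow, ← pow_mul]
  linear_combination (1 + c ^ 2) ^ n * hpow

theorem stmt_19_general (F : Type*) [Field F] [Fintype F] (q k m : ℕ)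
    (hq : Fintype.card F = q) (hodd : Odd q)
    (g : F) (hg : ∀ x : F, x ≠ 0 → ∃ n : ℕ, g ^ n = x)
    (hkodd : Odd k) (hm : q - 1 = 2 * m * k)
    (b : ℕ → F)
    (hb : ∀ i, b i = (1 + g ^ (2 * m * i)) ^ ((q - 3) / 2) * g ^ (m * i) * (-1) ^ i) :
    ∀ i, 1 ≤ i → i ≤ k - 1 → b i = b (k - i) := by
  intro i _ hik
  rw [mul_assoc] at hm
  have hq3 : 3 ≤ q := by
    have := hq ▸ Fintype.one_lt_card (α := F)
    obtain ⟨t, rfl⟩ := hodd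
    omega
  have hprim : IsPrimitiveRoot g (2 * (m * k)) := by
    rw [← hm, ← hq]
    exact isPrimitiveRoot_of_forall_pow_eq (ne_zero_of_forall_pow_eq (by omega) hg) hg
  have hmk : g ^ (m * k) = -1 := hprim.pow_eq_neg_one (by omega)
  have hcd : g ^ (m * i) * g ^ (m * (k - i)) = -1 := by
    rw [← pow_add, ← mul_add, Nat.add_sub_cancel' (show i ≤ k by omega), hmk]
  have hn : 2 * ((q - 3) / 2) + 2 = 2 * (m * k) := by
    obtain ⟨t, rfl⟩ := hodd
    omega
  have hd : (g ^ (m * (k - i))) ^ (2 * ((q - 3) / 2) + 2) = 1 := by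
    rw [hn, ← pow_mul, mul_comm, pow_mul, hprim.pow_eq_one, one_pow]
  have hsq : ∀ j, g ^ (2 * m * j) = (g ^ (m * j)) ^ 2 := fun j => by
    rw [← pow_mul]; ring_nf
  rw [hb, hb, hsq, hsq, neg_one_pow_sub_of_odd hkodd (by omega), mul_neg, ← neg_mul,
    one_add_sq_pow_mul_eq_neg _ hcd hd, neg_neg]

theorem stmt_19 (F : Type*) [Field F] [Fintype F] (q k m : ℕ)
    (hq : Fintype.card F = q) (hodd : Odd q)
    (g : F) (hg : ∀ x : F, x ≠ 0 → ∃ n : ℕ, g ^ n = x)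
    (hkodd : Odd k) (hk1 : 1 < k) (hm : q - 1 = 2 * m * k)
    (b : ℕ → F)
    (hb : ∀ i, b i = (1 + g ^ (2 * m * i)) ^ ((q - 3) / 2) * g ^ (m * i) * (-1) ^ i) :
    ∀ i, 1 ≤ i → i ≤ k - 1 → b i = b (k - i) :=
  stmt_19_general F q k m hq hodd g hg hkodd hm b hb
end
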